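/- arXiv:1601.01063 — 8 statements merged into one kernel-verified Lean document; each statement's English description precedes it below -/
import Mathlib

section
/- For every connected graph G of diameter 2, strc(G) ≤ src(G) + 1. -/
/- Definitions of the six rainbow connection parameters.

A colouring with (at most) `k` colours uses colours from `{0, ..., k-1}`.
Following the usual convention in the literature, only the colours appearing
on the edges / internal vertices of the witnessing paths are required to lie
in the palette; this yields e.g. `rvc(G) = 0` for complete graphs `G`. -/

namespace RainbowConn

variable {V : Type*}

/-- The internal vertices of a walk. -/
def internals {G : SimpleGraph V} {u v : V} (p : G.Walk u v) : List V :=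
  p.support.tail.dropLast

/-- The rainbow connection number `rc G`: the minimum number of colours in an
edge-colouring of `G` such that any two vertices are connected by a rainbow path. -/
noncomputable def rc (G : SimpleGraph V) : ℕ :=
  sInf {k | ∃ c : Sym2 V → ℕ, ∀ u v : V, ∃ p : G.Walk u v, p.IsPath ∧
    (p.edges.map c).Nodup ∧ ∀ e ∈ p.edges, c e < k}

/-- The strong rainbow connection number `src G`: the minimum number of colours in an
edge-colouring of `G` such that any two vertices are connected by a rainbow geodesic. -/
noncomputable def src (G : SimpleGraph V) : ℕ :=
  sInf {k | ∃ c : Sym2 V → ℕ, ∀ u v : V, ∃ p : G.Walk u v, p.IsPath ∧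
    p.length = G.dist u v ∧ (p.edges.map c).Nodup ∧ ∀ e ∈ p.edges, c e < k}

/-- The rainbow vertex-connection number `rvc G`: the minimum number of colours in a
vertex-colouring of `G` such that any two vertices are connected by a vertex-rainbow path. -/
noncomputable def rvc (G : SimpleGraph V) : ℕ :=
  sInf {k | ∃ c : V → ℕ, ∀ u v : V, ∃ p : G.Walk u v, p.IsPath ∧
    ((internals p).map c).Nodup ∧ ∀ x ∈ internals p, c x < k}

/-- The strong rainbow vertex-connection number `srvc G`: the minimum number of colours in a
vertex-colouring of `G` such that any two vertices are connected by a vertex-rainbow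
geodesic. -/
noncomputable def srvc (G : SimpleGraph V) : ℕ :=
  sInf {k | ∃ c : V → ℕ, ∀ u v : V, ∃ p : G.Walk u v, p.IsPath ∧
    p.length = G.dist u v ∧ ((internals p).map c).Nodup ∧ ∀ x ∈ internals p, c x < k}

/-- The total rainbow connection number `trc G`: the minimum number of colours in a
total-colouring of `G` such that any two vertices are connected by a total-rainbow path. -/
noncomputable def trc (G : SimpleGraph V) : ℕ :=
  sInf {k | ∃ (cE : Sym2 V → ℕ) (cV : V → ℕ), ∀ u v : V, ∃ p : G.Walk u v, p.IsPath ∧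
    (p.edges.map cE ++ (internals p).map cV).Nodup ∧
    (∀ e ∈ p.edges, cE e < k) ∧ ∀ x ∈ internals p, cV x < k}

/-- The strong total rainbow connection number `strc G`: the minimum number of colours in a
total-colouring of `G` such that any two vertices are connected by a total-rainbow
geodesic. -/
noncomputable def strc (G : SimpleGraph V) : ℕ :=
  sInf {k | ∃ (cE : Sym2 V → ℕ) (cV : V → ℕ), ∀ u v : V, ∃ p : G.Walk u v, p.IsPath ∧
    p.length = G.dist u v ∧ (p.edges.map cE ++ (internals p).map cV).Nodup ∧
    (∀ e ∈ p.edges, cE e < k) ∧ ∀ x ∈ internals p, cV x < k}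


open SimpleGraph


lemma nodup_of_length_le_one {α : Type*} {l : List α} (h : l.length ≤ 1) : l.Nodup := by
  match l with
  | [] => exact List.nodup_nil
  | [a] => exact List.nodup_singleton a
  | a :: b :: t => simp at h

/-- For every connected graph `G` of diameter `2`, `strc(G) ≤ src(G) + 1`. -/
theorem strc_le_src_add_one_of_diam_two {V : Type*} [Fintype V] (G : SimpleGraph V)
    (hconn : G.Connected) (hdiam : G.diam = 2) :
    strc G ≤ src G + 1 := by
  classical
  -- the defining set of `src` is nonempty
  have hne : {k | ∃ c : Sym2 V → ℕ, ∀ u v : V, ∃ p : G.Walk u v, p.IsPath ∧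
      p.length = G.dist u v ∧ (p.edges.map c).Nodup ∧ ∀ e ∈ p.edges, c e < k}.Nonempty := by
    refine ⟨Fintype.card (Sym2 V), fun e => ((Fintype.equivFin (Sym2 V)) e : ℕ), ?_⟩
    intro u v
    obtain ⟨p, hp, hl⟩ := hconn.exists_path_of_dist u v
    refine ⟨p, hp, hl, ?_, fun e _ => ((Fintype.equivFin (Sym2 V)) e).isLt⟩
    exact hp.isTrail.edges_nodup.map
      (Fin.val_injective.comp (Fintype.equivFin (Sym2 V)).injective)
  obtain ⟨c, hc⟩ := Nat.sInf_mem hne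
  set k := src G with hk
  have hediam : G.ediam ≠ ⊤ := ediam_ne_top_of_diam_ne_zero (by omega)
  refine Nat.sInf_le ?_
  refine ⟨c, fun _ => k, fun u v => ?_⟩
  obtain ⟨p, hp, hl, hnd, hlt⟩ := hc u v
  have hlen : p.length ≤ 2 := by
    rw [hl]
    calc G.dist u v ≤ G.diam := dist_le_diam hediam
    _ = 2 := hdiam
  have hint : (internals p).length ≤ 1 := by
    have : p.support.length = p.length + 1 := p.length_support
    simp only [internals, List.length_dropLast, List.length_tail, this]
    omega
  refine ⟨p, hp, hl, ?_, fun e he => Nat.lt_succ_of_lt (hlt e he),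
    fun x _ => Nat.lt_succ_self k⟩
  rw [List.nodup_append]
  refine ⟨hnd, nodup_of_length_le_one (by simpa using hint), ?_⟩
  intro a ha b hb
  obtain ⟨e, he, rfl⟩ := List.mem_map.mp ha
  obtain ⟨x, hx, hcx⟩ := List.mem_map.mp hb
  subst hcx
  exact Nat.ne_of_lt (hlt e he)

end RainbowConn
end

section
/- For every non-trivial connected graph G with q non-pendent vertices, strc(G) ≤ src(G) + q. -/
/- Definitions of the six rainbow connection parameters.

A colouring with (at most) `k` colours uses colours from `{0, ..., k-1}`.
Following the usual convention in the literature, only the colours appearing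
on the edges / internal vertices of the witnessing paths are required to lie
in the palette; this yields e.g. `rvc(G) = 0` for complete graphs `G`. -/

namespace RainbowConn

variable {V : Type*}

open SimpleGraph

/-- Every internal vertex of a path has two distinct neighbours. -/
lemma internal_two_nbrs {G : SimpleGraph V} {u v x : V} (p : G.Walk u v)
    (hp : p.IsPath) (hx : x ∈ internals p) :
    ∃ a b, G.Adj x a ∧ G.Adj x b ∧ a ≠ b := by
  induction p with
  | nil => simp [internals] at hx
  | @cons u w v h q ih =>
    cases q with
    | nil => simp [internals] at hx
    | @cons w y v h' q' =>
      have hne : q'.support ≠ [] := q'.support_ne_nil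
      have hx' : x ∈ (w :: q'.support).dropLast := by
        simpa [internals] using hx
      rw [List.dropLast_cons_of_ne_nil hne] at hx'
      rcases List.mem_cons.1 hx' with rfl | hmem
      · refine ⟨u, y, h.symm, h', ?_⟩
        intro huy
        have hu : u ∈ (Walk.cons h' q').support := by
          rw [huy]; simp [Walk.support_cons, Walk.start_mem_support]
        exact ((Walk.cons_isPath_iff _ _).1 hp).2 hu
      · exact ih hp.of_cons (by simpa [internals] using hmem)

/-- For every non-trivial connected graph `G` with `q` non-pendent vertices,
`strc(G) ≤ src(G) + q`. -/
theorem strc_le_src_add_nonpendent {V : Type*} [Fintype V] [DecidableEq V]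
    (G : SimpleGraph V) [DecidableRel G.Adj]
    (hconn : G.Connected) (hV : 2 ≤ Fintype.card V) :
    strc G ≤ src G + (Finset.univ.filter fun v => 2 ≤ G.degree v).card := by
  classical
  set S : Finset V := Finset.univ.filter fun v => 2 ≤ G.degree v with hS
  -- The defining set of `src` is nonempty.
  have hsrcne : {k | ∃ c : Sym2 V → ℕ, ∀ u v : V, ∃ p : G.Walk u v, p.IsPath ∧
      p.length = G.dist u v ∧ (p.edges.map c).Nodup ∧ ∀ e ∈ p.edges, c e < k}.Nonempty := by
    refine ⟨Fintype.card (Sym2 V), fun e => (Fintype.equivFin (Sym2 V) e : ℕ), fun u v => ?_⟩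
    obtain ⟨w, hw⟩ := hconn.exists_walk_length_eq_dist u v
    refine ⟨w.bypass, w.bypass_isPath,
      le_antisymm (hw ▸ w.length_bypass_le) (SimpleGraph.dist_le _), ?_, fun e _ => (Fintype.equivFin (Sym2 V) e).isLt⟩
    exact (w.bypass_isPath.isTrail.edges_nodup).map
      (fun a b hab => (Fintype.equivFin (Sym2 V)).injective (Fin.val_injective hab))
  have hsrc := Nat.sInf_mem hsrcne
  obtain ⟨cE, hcE⟩ := hsrc
  -- vertex colouring: distinct fresh colours on non-pendent vertices
  set cV : V → ℕ := fun v => if h : v ∈ S then src G + ((Fintype.equivFin S) ⟨v, h⟩ : ℕ) else 0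
    with hcV
  -- membership of internal vertices in S
  have hmemS : ∀ {u v x : V} (p : G.Walk u v), p.IsPath → x ∈ internals p → x ∈ S := by
    intro u v x p hp hx
    obtain ⟨a, b, ha, hb, hab⟩ := internal_two_nbrs p hp hx
    refine Finset.mem_filter.2 ⟨Finset.mem_univ _, ?_⟩
    rw [← SimpleGraph.card_neighborFinset_eq_degree]
    exact Finset.one_lt_card.2 ⟨a, by simpa using ha, b, by simpa using hb, hab⟩
  have hcVmem : ∀ x ∈ S, src G ≤ cV x ∧ cV x < src G + S.card := by
    intro x hx
    rw [hcV]; simp only [dif_pos hx]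
    refine ⟨Nat.le_add_right _ _, ?_⟩
    have h1 := ((Fintype.equivFin S) ⟨x, hx⟩).isLt
    have h2 := Fintype.card_coe S
    omega
  have hcVinj : ∀ x ∈ S, ∀ y ∈ S, cV x = cV y → x = y := by
    intro x hx y hy hxy
    rw [hcV] at hxy; simp only [dif_pos hx, dif_pos hy] at hxy
    have := (Fintype.equivFin S).injective (Fin.val_injective (Nat.add_left_cancel hxy))
    exact Subtype.ext_iff.1 this
  -- show `src G + S.card` belongs to the defining set of `strc`
  refine Nat.sInf_le ⟨cE, cV, fun u v => ?_⟩
  obtain ⟨p, hpath, hlen, hnodup, hbound⟩ := hcE u v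
  refine ⟨p, hpath, hlen, ?_, fun e he => lt_of_lt_of_le (hbound e he) (Nat.le_add_right _ _),
    fun x hx => (hcVmem x (hmemS p hpath hx)).2⟩
  rw [List.nodup_append]
  refine ⟨hnodup, ?_, ?_⟩
  · have hintnd : (internals p).Nodup :=
      hpath.support_nodup.sublist ((List.dropLast_sublist _).trans (List.tail_sublist _))
    exact hintnd.map_on (fun x hx y hy hxy =>
      hcVinj x (hmemS p hpath hx) y (hmemS p hpath hy) hxy)
  · intro n hn n'' hn' hnn''; subst hnn''
    obtain ⟨e, he, rfl⟩ := List.mem_map.1 hn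
    obtain ⟨x, hx, hex⟩ := List.mem_map.1 hn'
    have h1 := hbound e he
    have h2 := (hcVmem x (hmemS p hpath hx)).1
    rw [hex] at h2
    exact absurd h2 (not_le.2 h1)

end RainbowConn
end

section
/- Let G be a non-trivial connected graph. Then rc(G) = 2 if and only if src(G) = 2. -/
/- Definitions of the six rainbow connection parameters.

A colouring with (at most) `k` colours uses colours from `{0, ..., k-1}`.
Following the usual convention in the literature, only the colours appearing
on the edges / internal vertices of the witnessing paths are required to lie
in the palette; this yields e.g. `rvc(G) = 0` for complete graphs `G`. -/

namespace RainbowConn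

variable {V : Type*}

open SimpleGraph


lemma nodup_lt_length_le {l : List ℕ} (h : l.Nodup) {k : ℕ} (hk : ∀ x ∈ l, x < k) :
    l.length ≤ k := by
  classical
  have hsub : l.toFinset ⊆ Finset.range k := by
    intro x hx
    simp only [List.mem_toFinset] at hx
    exact Finset.mem_range.mpr (hk x hx)
  have := Finset.card_le_card hsub
  rwa [List.toFinset_card_of_nodup h, Finset.card_range] at this

/-- For a non-trivial connected graph `G`, `rc(G) = 2` if and only if `src(G) = 2`. -/
theorem rc_eq_two_iff_src_eq_two {V : Type*} [Fintype V] (G : SimpleGraph V)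
    (hconn : G.Connected) (hV : 2 ≤ Fintype.card V) :
    rc G = 2 ↔ src G = 2 := by
  classical
  set Sr := {k | ∃ c : Sym2 V → ℕ, ∀ u v : V, ∃ p : G.Walk u v, p.IsPath ∧
    (p.edges.map c).Nodup ∧ ∀ e ∈ p.edges, c e < k} with hSr
  set Ss := {k | ∃ c : Sym2 V → ℕ, ∀ u v : V, ∃ p : G.Walk u v, p.IsPath ∧
    p.length = G.dist u v ∧ (p.edges.map c).Nodup ∧ ∀ e ∈ p.edges, c e < k} with hSs
  have hsub : Ss ⊆ Sr := by
    rintro k ⟨c, hc⟩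
    refine ⟨c, fun u v => ?_⟩
    obtain ⟨p, hp, _, hn, hb⟩ := hc u v
    exact ⟨p, hp, hn, hb⟩
  have hrc_def : rc G = sInf Sr := rfl
  have hsrc_def : src G = sInf Ss := rfl
  constructor
  · intro hrc
    rw [hrc_def] at hrc
    have hne : Sr.Nonempty := by
      by_contra h
      rw [Set.not_nonempty_iff_eq_empty] at h
      rw [h, Nat.sInf_empty] at hrc
      omega
    have h2 : (2 : ℕ) ∈ Sr := hrc ▸ Nat.sInf_mem hne
    obtain ⟨c₀, hc⟩ := h2
    -- normalize the colouring into the palette {0,1}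
    set c : Sym2 V → ℕ := fun e => if c₀ e < 2 then c₀ e else 0 with hcdef
    have hclt : ∀ e, c e < 2 := by
      intro e; simp only [hcdef]; split <;> omega
    have hc' : ∀ u v : V, ∃ p : G.Walk u v, p.IsPath ∧
        (p.edges.map c).Nodup ∧ ∀ e ∈ p.edges, c e < 2 := by
      intro u v
      obtain ⟨p, hp, hn, hb⟩ := hc u v
      have heq : p.edges.map c = p.edges.map c₀ := by
        apply List.map_congr_left
        intro e he
        simp only [hcdef, if_pos (hb e he)]
      exact ⟨p, hp, heq ▸ hn, fun e _ => hclt e⟩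
    have h2s : (2 : ℕ) ∈ Ss := by
      refine ⟨c, fun u v => ?_⟩
      obtain ⟨p, hp, hn, hb⟩ := hc' u v
      have hlen : p.length ≤ 2 := by
        have := nodup_lt_length_le hn (fun x hx => by
          obtain ⟨e, he, rfl⟩ := List.mem_map.mp hx; exact hb e he)
        rwa [List.length_map, Walk.length_edges] at this
      by_cases huv : u = v
      · subst huv
        exact ⟨Walk.nil, Walk.IsPath.nil, by simp [SimpleGraph.dist_self], by simp, by simp⟩
      by_cases hadj : G.Adj u v
      · refine ⟨Walk.cons hadj Walk.nil, by simp [Walk.isPath_def, hadj.ne], ?_, by simp, ?_⟩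
        · simp [(dist_eq_one_iff_adj).mpr hadj]
        · intro e _; exact hclt e
      · have hd1 : G.dist u v ≠ 1 := fun h => hadj (dist_eq_one_iff_adj.mp h)
        have hd0 : 0 < G.dist u v := hconn.pos_dist_of_ne huv
        have hdle : G.dist u v ≤ p.length := dist_le p
        have hl : p.length = G.dist u v := by omega
        exact ⟨p, hp, hl, hn, hb⟩
    rw [hsrc_def]
    refine le_antisymm (Nat.sInf_le h2s) ?_
    refine le_csInf ⟨2, h2s⟩ fun m hm => ?_
    have : sInf Sr ≤ m := Nat.sInf_le (hsub hm)
    omega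
  · intro hsrc
    rw [hsrc_def] at hsrc
    have hne : Ss.Nonempty := by
      by_contra h
      rw [Set.not_nonempty_iff_eq_empty] at h
      rw [h, Nat.sInf_empty] at hsrc
      omega
    have h2 : (2 : ℕ) ∈ Ss := hsrc ▸ Nat.sInf_mem hne
    have hle : sInf Sr ≤ 2 := Nat.sInf_le (hsub h2)
    rw [hrc_def]
    refine le_antisymm hle ?_
    refine le_csInf ⟨2, hsub h2⟩ fun m hm => ?_
    by_contra hlt
    push_neg at hlt
    have hm1 : m ≤ 1 := by omega
    obtain ⟨c, hc⟩ := hm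
    have hcomp : ∀ u v : V, u ≠ v → G.Adj u v := by
      intro u v huv
      obtain ⟨p, hp, hn, hb⟩ := hc u v
      have hlen : p.length ≤ 1 := by
        have := nodup_lt_length_le (k := 1) hn (fun x hx => by
          obtain ⟨e, he, rfl⟩ := List.mem_map.mp hx
          have := hb e he; omega)
        rw [List.length_map, Walk.length_edges] at this
        omega
      cases p with
      | nil => exact absurd rfl huv
      | cons h q =>
        cases q with
        | nil => exact h
        | cons h' q' => simp [Walk.length_cons] at hlen
    have h1s : (1 : ℕ) ∈ Ss := by
      refine ⟨fun _ => 0, fun u v => ?_⟩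
      by_cases huv : u = v
      · subst huv
        exact ⟨Walk.nil, Walk.IsPath.nil, by simp [SimpleGraph.dist_self], by simp, by simp⟩
      · have hadj := hcomp u v huv
        refine ⟨Walk.cons hadj Walk.nil, by simp [Walk.isPath_def, hadj.ne], ?_, by simp, ?_⟩
        · simp [(dist_eq_one_iff_adj).mpr hadj]
        · intro e _; simp
    have : sInf Ss ≤ 1 := Nat.sInf_le h1s
    omega


end RainbowConn
end

section
/- Let G be a non-trivial connected graph. Then trc(G) = 3 if and only if strc(G) = 3. -/
/- Definitions of the six rainbow connection parameters.

A colouring with (at most) `k` colours uses colours from `{0, ..., k-1}`.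
Following the usual convention in the literature, only the colours appearing
on the edges / internal vertices of the witnessing paths are required to lie
in the palette; this yields e.g. `rvc(G) = 0` for complete graphs `G`. -/

namespace RainbowConn

variable {V : Type*}

open SimpleGraph

lemma nodup_bound {k : ℕ} (L : List ℕ) (hnd : L.Nodup) (hb : ∀ x ∈ L, x < k) :
    L.length ≤ k := by
  have h1 : L.toFinset.card = L.length := List.toFinset_card_of_nodup hnd
  have h2 : L.toFinset ⊆ Finset.range k := fun x hx =>
    Finset.mem_range.mpr (hb x (List.mem_toFinset.mp hx))
  calc L.length = L.toFinset.card := h1.symm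
    _ ≤ (Finset.range k).card := Finset.card_le_card h2
    _ = k := Finset.card_range k

lemma internals_length {G : SimpleGraph V} {u v : V} (p : G.Walk u v) :
    (internals p).length = p.length - 1 := by
  simp [internals, SimpleGraph.Walk.length_support]

lemma key [Fintype V] (G : SimpleGraph V)
    (hconn : G.Connected) (hV : 2 ≤ Fintype.card V) {k : ℕ} (hk : k ≤ 3)
    (h : ∃ (cE : Sym2 V → ℕ) (cV : V → ℕ), ∀ u v : V, ∃ p : G.Walk u v, p.IsPath ∧
      (p.edges.map cE ++ (internals p).map cV).Nodup ∧
      (∀ e ∈ p.edges, cE e < k) ∧ ∀ x ∈ internals p, cV x < k) :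
    ∃ (cE : Sym2 V → ℕ) (cV : V → ℕ), ∀ u v : V, ∃ p : G.Walk u v, p.IsPath ∧
      p.length = G.dist u v ∧ (p.edges.map cE ++ (internals p).map cV).Nodup ∧
      (∀ e ∈ p.edges, cE e < k) ∧ ∀ x ∈ internals p, cV x < k := by
  obtain ⟨cE, cV, hc⟩ := h
  have hk1 : 1 ≤ k := by
    obtain ⟨u, v, huv⟩ := Fintype.exists_pair_of_one_lt_card (α := V) (by omega)
    obtain ⟨p, hp, hnd, hbE, hbV⟩ := hc u v
    have hlen : p.length ≠ 0 := fun h0 => huv (SimpleGraph.Walk.eq_of_length_eq_zero h0)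
    have hne : p.edges ≠ [] := by
      intro he
      apply hlen
      rw [← SimpleGraph.Walk.length_edges, he]
      rfl
    obtain ⟨e, he⟩ := List.exists_mem_of_ne_nil _ hne
    have := hbE e he
    omega
  refine ⟨fun e => min (cE e) (k-1), cV, fun u v => ?_⟩
  by_cases huv : u = v
  · subst huv
    exact ⟨SimpleGraph.Walk.nil, by simp, by simp [SimpleGraph.dist_self],
      by simp [internals], by simp, by simp [internals]⟩
  by_cases hadj : G.Adj u v
  · refine ⟨hadj.toWalk, ?_, ?_, ?_, ?_, ?_⟩
    · simp [SimpleGraph.Adj.toWalk, SimpleGraph.Walk.isPath_def, huv]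
    · simp [SimpleGraph.Adj.toWalk, (SimpleGraph.dist_eq_one_iff_adj).mpr hadj]
    · simp [SimpleGraph.Adj.toWalk, internals]
    · intro e he
      simp [SimpleGraph.Adj.toWalk] at he
      subst he
      show min (cE s(u,v)) (k-1) < k
      omega
    · intro x hx
      simp [SimpleGraph.Adj.toWalk, internals] at hx
  · obtain ⟨p, hp, hnd, hbE, hbV⟩ := hc u v
    have hLlen : (p.edges.map cE ++ (internals p).map cV).length
        = p.length + (p.length - 1) := by
      simp [internals_length, SimpleGraph.Walk.length_edges]
    have hble : (p.edges.map cE ++ (internals p).map cV).length ≤ k := by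
      apply nodup_bound _ hnd
      intro x hx
      rcases List.mem_append.mp hx with hx | hx
      · obtain ⟨e, he, rfl⟩ := List.mem_map.mp hx
        exact hbE e he
      · obtain ⟨y, hy, rfl⟩ := List.mem_map.mp hx
        exact hbV y hy
    have hl0 : p.length ≠ 0 := fun h0 => huv (SimpleGraph.Walk.eq_of_length_eq_zero h0)
    have hl1 : p.length ≠ 1 := fun h1 => hadj (SimpleGraph.Walk.adj_of_length_eq_one h1)
    have hl2 : p.length = 2 := by omega
    have hd0 : G.dist u v ≠ 0 := fun h0 => huv ((hconn.dist_eq_zero_iff).mp h0)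
    have hd1 : G.dist u v ≠ 1 := fun h1 => hadj ((SimpleGraph.dist_eq_one_iff_adj).mp h1)
    have hdle : G.dist u v ≤ p.length := SimpleGraph.dist_le p
    have hmapeq : p.edges.map (fun e => min (cE e) (k-1)) = p.edges.map cE := by
      apply List.map_congr_left
      intro e he
      have := hbE e he
      omega
    refine ⟨p, hp, by omega, ?_, ?_, hbV⟩
    · rw [hmapeq]; exact hnd
    · intro e he
      have := hbE e he
      show min (cE e) (k-1) < k
      omega
  


/-- For a non-trivial connected graph `G`, `trc(G) = 3` if and only if `strc(G) = 3`. -/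
theorem trc_eq_three_iff_strc_eq_three {V : Type*} [Fintype V] (G : SimpleGraph V)
    (hconn : G.Connected) (hV : 2 ≤ Fintype.card V) :
    trc G = 3 ↔ strc G = 3 := by
  let S : Set ℕ := {k | ∃ (cE : Sym2 V → ℕ) (cV : V → ℕ), ∀ u v : V, ∃ p : G.Walk u v, p.IsPath ∧
    (p.edges.map cE ++ (internals p).map cV).Nodup ∧
    (∀ e ∈ p.edges, cE e < k) ∧ ∀ x ∈ internals p, cV x < k}
  let T : Set ℕ := {k | ∃ (cE : Sym2 V → ℕ) (cV : V → ℕ), ∀ u v : V, ∃ p : G.Walk u v, p.IsPath ∧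
    p.length = G.dist u v ∧ (p.edges.map cE ++ (internals p).map cV).Nodup ∧
    (∀ e ∈ p.edges, cE e < k) ∧ ∀ x ∈ internals p, cV x < k}
  have htrc : trc G = sInf S := rfl
  have hstrc : strc G = sInf T := rfl
  have hsub : T ⊆ S := by
    rintro k ⟨cE, cV, hc⟩
    exact ⟨cE, cV, fun u v => by
      obtain ⟨p, h1, _, h3, h4, h5⟩ := hc u v
      exact ⟨p, h1, h3, h4, h5⟩⟩
  have hkey : ∀ k ∈ S, k ≤ 3 → k ∈ T := fun k hkS hk => key G hconn hV hk hkS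
  rw [htrc, hstrc]
  constructor
  · intro h3
    have hne : S.Nonempty := by
      by_contra hne
      rw [Set.not_nonempty_iff_eq_empty] at hne
      rw [hne, Nat.sInf_empty] at h3
      omega
    have h3S : (3:ℕ) ∈ S := h3 ▸ Nat.sInf_mem hne
    have h3T : (3:ℕ) ∈ T := hkey 3 h3S le_rfl
    have hle : sInf T ≤ 3 := Nat.sInf_le h3T
    have hTmem : sInf T ∈ T := Nat.sInf_mem ⟨3, h3T⟩
    have hle2 : sInf S ≤ sInf T := Nat.sInf_le (hsub hTmem)
    omega
  · intro h3
    have hTne : T.Nonempty := by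
      by_contra hne
      rw [Set.not_nonempty_iff_eq_empty] at hne
      rw [hne, Nat.sInf_empty] at h3
      omega
    have h3T : (3:ℕ) ∈ T := h3 ▸ Nat.sInf_mem hTne
    have h3S : (3:ℕ) ∈ S := hsub h3T
    have hle : sInf S ≤ 3 := Nat.sInf_le h3S
    have hSmem : sInf S ∈ S := Nat.sInf_mem ⟨3, h3S⟩
    have hmemT : sInf S ∈ T := hkey _ hSmem hle
    have hle2 : sInf T ≤ sInf S := Nat.sInf_le hmemT
    omega

end RainbowConn
end

section
/- Let G be a non-trivial connected graph. Then trc(G) = 4 if and only if strc(G) = 4. -/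
/- Definitions of the six rainbow connection parameters.

A colouring with (at most) `k` colours uses colours from `{0, ..., k-1}`.
Following the usual convention in the literature, only the colours appearing
on the edges / internal vertices of the witnessing paths are required to lie
in the palette; this yields e.g. `rvc(G) = 0` for complete graphs `G`. -/

namespace RainbowConn

variable {V : Type*}

open SimpleGraph


private lemma length_le_of_nodup_lt {k : ℕ} {L : List ℕ} (h1 : L.Nodup)
    (h2 : ∀ x ∈ L, x < k) : L.length ≤ k := by
  classical
  have hsub : L.toFinset ⊆ Finset.range k := fun x hx =>
    Finset.mem_range.mpr (h2 x (List.mem_toFinset.mp hx))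
  have := Finset.card_le_card hsub
  rwa [List.toFinset_card_of_nodup h1, Finset.card_range] at this

private lemma strong_of_weak {G : SimpleGraph V} (hconn : G.Connected) {k : ℕ}
    (hk : k ≤ 4) (hk1 : 1 ≤ k)
    (h : ∃ (cE : Sym2 V → ℕ) (cV : V → ℕ), ∀ u v : V, ∃ p : G.Walk u v, p.IsPath ∧
      (p.edges.map cE ++ (internals p).map cV).Nodup ∧
      (∀ e ∈ p.edges, cE e < k) ∧ ∀ x ∈ internals p, cV x < k) :
    ∃ (cE : Sym2 V → ℕ) (cV : V → ℕ), ∀ u v : V, ∃ p : G.Walk u v, p.IsPath ∧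
      p.length = G.dist u v ∧ (p.edges.map cE ++ (internals p).map cV).Nodup ∧
      (∀ e ∈ p.edges, cE e < k) ∧ ∀ x ∈ internals p, cV x < k := by
  classical
  obtain ⟨cE, cV, h⟩ := h
  refine ⟨fun e => if cE e < k then cE e else 0, cV, fun u v => ?_⟩
  by_cases huv : u = v
  · subst huv
    exact ⟨SimpleGraph.Walk.nil, SimpleGraph.Walk.IsPath.nil,
      by simp [SimpleGraph.dist_self], by simp [internals], by simp, by simp [internals]⟩
  by_cases hadj : G.Adj u v
  · refine ⟨SimpleGraph.Walk.cons hadj SimpleGraph.Walk.nil, ?_, ?_, ?_, ?_, ?_⟩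
    · simp [SimpleGraph.Walk.isPath_def, (G.ne_of_adj hadj)]
    · simp [SimpleGraph.dist_eq_one_iff_adj.mpr hadj]
    · simp [internals]
    · intro e he
      simp only [SimpleGraph.Walk.edges_cons, SimpleGraph.Walk.edges_nil,
        List.mem_singleton] at he
      subst he
      dsimp only
      split
      · assumption
      · exact hk1
    · simp [internals]
  · obtain ⟨p, hp, hnd, hE, hVv⟩ := h u v
    have hlenE : (p.edges.map cE).length = p.length := by
      simp [SimpleGraph.Walk.length_edges]
    have hlenI : (internals p).length = p.length - 1 := by
      simp [internals, SimpleGraph.Walk.length_support]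
    have hall : ∀ x ∈ p.edges.map cE ++ (internals p).map cV, x < k := by
      intro x hx
      rcases List.mem_append.mp hx with hx | hx
      · obtain ⟨e, he, rfl⟩ := List.mem_map.mp hx; exact hE e he
      · obtain ⟨y, hy, rfl⟩ := List.mem_map.mp hx; exact hVv y hy
    have hlen := length_le_of_nodup_lt hnd hall
    rw [List.length_append, hlenE, List.length_map, hlenI] at hlen
    have hne0 : p.length ≠ 0 := fun h0 => huv (SimpleGraph.Walk.eq_of_length_eq_zero h0)
    have hne1 : p.length ≠ 1 := fun h1 => hadj (SimpleGraph.Walk.adj_of_length_eq_one h1)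
    have hlen2 : p.length = 2 := by omega
    have hdist : G.dist u v = 2 := by
      have h1 : G.dist u v ≤ 2 := hlen2 ▸ SimpleGraph.dist_le p
      have h2 : G.dist u v ≠ 0 := fun h0 => huv (hconn.dist_eq_zero_iff.mp h0)
      have h3 : G.dist u v ≠ 1 := fun h1 => hadj (SimpleGraph.dist_eq_one_iff_adj.mp h1)
      omega
    have hmap : p.edges.map (fun e => if cE e < k then cE e else 0) = p.edges.map cE :=
      List.map_congr_left fun e he => if_pos (hE e he)
    refine ⟨p, hp, by rw [hlen2, hdist], by rw [hmap]; exact hnd, ?_, hVv⟩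
    intro e he
    simp only [hE e he, if_pos]

/-- For a non-trivial connected graph `G`, `trc(G) = 4` if and only if `strc(G) = 4`. -/
theorem trc_eq_four_iff_strc_eq_four {V : Type*} [Fintype V] (G : SimpleGraph V)
    (hconn : G.Connected) (hV : 2 ≤ Fintype.card V) :
    trc G = 4 ↔ strc G = 4 := by
  classical
  set T := {k | ∃ (cE : Sym2 V → ℕ) (cV : V → ℕ), ∀ u v : V, ∃ p : G.Walk u v, p.IsPath ∧
    (p.edges.map cE ++ (internals p).map cV).Nodup ∧
    (∀ e ∈ p.edges, cE e < k) ∧ ∀ x ∈ internals p, cV x < k} with hT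
  set S := {k | ∃ (cE : Sym2 V → ℕ) (cV : V → ℕ), ∀ u v : V, ∃ p : G.Walk u v, p.IsPath ∧
    p.length = G.dist u v ∧ (p.edges.map cE ++ (internals p).map cV).Nodup ∧
    (∀ e ∈ p.edges, cE e < k) ∧ ∀ x ∈ internals p, cV x < k} with hS
  have htrc : trc G = sInf T := rfl
  have hstrc : strc G = sInf S := rfl
  have hsub : S ⊆ T := by
    rintro k ⟨cE, cV, h⟩
    exact ⟨cE, cV, fun u v => by
      obtain ⟨p, h1, _, h3, h4, h5⟩ := h u v; exact ⟨p, h1, h3, h4, h5⟩⟩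
  have hone : ∀ k ∈ T, 1 ≤ k := by
    intro k hkT
    obtain ⟨a, b, hab⟩ := Fintype.exists_pair_of_one_lt_card (α := V) (by omega)
    obtain ⟨cE, cV, hc⟩ := hkT
    obtain ⟨p, _, _, hE, _⟩ := hc a b
    have hne0 : p.length ≠ 0 := fun h0 => hab (SimpleGraph.Walk.eq_of_length_eq_zero h0)
    have : p.edges ≠ [] := by
      intro h0
      apply hne0
      rw [← SimpleGraph.Walk.length_edges, h0]; rfl
    obtain ⟨e, he⟩ := List.exists_mem_of_ne_nil _ this
    have hlt := hE e he
    omega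
  constructor
  · intro h4
    rw [htrc] at h4
    have hTne : T.Nonempty := by
      rw [Set.nonempty_iff_ne_empty]
      intro h0
      rw [h0, Nat.sInf_empty] at h4
      omega
    have hmem : (4 : ℕ) ∈ T := h4 ▸ Nat.sInf_mem hTne
    have hSmem : (4 : ℕ) ∈ S := strong_of_weak hconn le_rfl (by omega) hmem
    rw [hstrc]
    refine le_antisymm (Nat.sInf_le hSmem) ?_
    have : sInf S ∈ T := hsub (Nat.sInf_mem ⟨4, hSmem⟩)
    calc 4 = sInf T := h4.symm
    _ ≤ sInf S := Nat.sInf_le this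
  · intro h4
    rw [hstrc] at h4
    have hSne : S.Nonempty := by
      rw [Set.nonempty_iff_ne_empty]
      intro h0
      rw [h0, Nat.sInf_empty] at h4
      omega
    have hS4 : (4 : ℕ) ∈ S := h4 ▸ Nat.sInf_mem hSne
    have hTne : T.Nonempty := ⟨4, hsub hS4⟩
    have htle : sInf T ≤ 4 := Nat.sInf_le (hsub hS4)
    have htmem : sInf T ∈ T := Nat.sInf_mem hTne
    have hSmem : sInf T ∈ S := strong_of_weak hconn htle (hone _ htmem) htmem
    rw [htrc]
    refine le_antisymm htle ?_
    calc 4 = sInf S := h4.symm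
    _ ≤ sInf T := Nat.sInf_le hSmem

end RainbowConn
end

section
/- Let T be a tree with n ≥ 2 vertices and q non-pendent vertices. Then rvc(T) = srvc(T) = q and trc(T) = strc(T) = n − 1 + q. In particular, for n ≥ 2, rvc(T) = srvc(T) = n − 2 (equivalently trc(T) = strc(T) = 2n − 3) if and only if T is a path; and for n ≥ 3, rvc(T) = srvc(T) = 1 (equivalently trc(T) = strc(T) = n) if and only if T is a star. -/
/- Definitions of the six rainbow connection parameters.

A colouring with (at most) `k` colours uses colours from `{0, ..., k-1}`.
Following the usual convention in the literature, only the colours appearing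
on the edges / internal vertices of the witnessing paths are required to lie
in the palette; this yields e.g. `rvc(G) = 0` for complete graphs `G`. -/

namespace RainbowConn

variable {V : Type*}

open SimpleGraph


open SimpleGraph Walk

variable {T : SimpleGraph V}

lemma walk_eq (hT : T.IsTree) {u v : V} {p q : T.Walk u v} (hp : p.IsPath) (hq : q.IsPath) :
    p = q := (hT.existsUnique_path u v).unique hp hq

lemma internals_sublist_support {u v : V} (p : T.Walk u v) :
    List.Sublist (internals p) p.support :=
  (List.dropLast_sublist _).trans (List.tail_sublist _)

lemma internals_nodup {u v : V} {p : T.Walk u v} (hp : p.IsPath) : (internals p).Nodup :=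
  (internals_sublist_support p).nodup hp.support_nodup

lemma mem_support_of_mem_internals {u v x : V} {p : T.Walk u v} (hx : x ∈ internals p) :
    x ∈ p.support := (internals_sublist_support p).subset hx

lemma tail_nodup {u v : V} {p : T.Walk u v} (hp : p.IsPath) : p.support.tail.Nodup := by
  have h2 := hp.support_nodup
  rw [p.support_eq_cons, List.nodup_cons] at h2
  exact h2.2

lemma ne_fst_of_mem_internals {u v x : V} {p : T.Walk u v} (hp : p.IsPath)
    (hx : x ∈ internals p) : x ≠ u := by
  have h1 : x ∈ p.support.tail := (List.dropLast_sublist _).subset hx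
  have h2 := hp.support_nodup
  rw [p.support_eq_cons, List.nodup_cons] at h2
  rintro rfl
  exact h2.1 h1

lemma ne_snd_of_mem_internals {u v x : V} {p : T.Walk u v} (hp : p.IsPath)
    (hx : x ∈ internals p) : x ≠ v := by
  have h1 : x ∈ p.support.tail := (List.dropLast_sublist _).subset hx
  have htne : p.support.tail ≠ [] := List.ne_nil_of_mem h1
  have hlast : p.support.tail.getLast htne = v := by
    rw [List.getLast_tail]; exact p.getLast_support
  have h2 : (p.support.tail.dropLast ++ [p.support.tail.getLast htne]).Nodup := by
    rw [List.dropLast_append_getLast htne]; exact tail_nodup hp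
  have h3 := (List.nodup_append'.mp h2).2.2
  rintro rfl
  exact h3 hx (by simp [hlast])

lemma mem_internals {u v x : V} {p : T.Walk u v} (hx : x ∈ p.support)
    (hxu : x ≠ u) (hxv : x ≠ v) : x ∈ internals p := by
  rw [p.support_eq_cons] at hx
  rcases List.mem_cons.mp hx with rfl | hx
  · exact absurd rfl hxu
  · have htne : p.support.tail ≠ [] := List.ne_nil_of_mem hx
    have hlast : p.support.tail.getLast htne = v := by
      rw [List.getLast_tail]; exact p.getLast_support
    rw [← List.dropLast_append_getLast htne, List.mem_append] at hx
    rcases hx with hx | hx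
    · exact hx
    · simp only [List.mem_singleton] at hx
      rw [hlast] at hx
      exact absurd hx hxv



set_option linter.unusedSectionVars false

lemma internals_cons {u w v : V} (h : T.Adj u w) (q : T.Walk w v) :
    internals (Walk.cons h q) = q.support.dropLast := by
  simp [internals, Walk.support_cons]

/-- every internal vertex has two distinct neighbours lying on the path's support -/
lemma internals_two_nbrs : ∀ {u v : V} (p : T.Walk u v), p.IsPath → ∀ x ∈ internals p,
    ∃ a b : V, a ≠ b ∧ T.Adj x a ∧ T.Adj x b ∧ a ∈ p.support ∧ b ∈ p.support
  | _, _, Walk.nil, _, x, hx => by simp [internals] at hx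
  | _, _, Walk.cons h Walk.nil, _, x, hx => by
      rw [internals_cons] at hx; simp at hx
  | _, _, Walk.cons h (Walk.cons h' q), hp, x, hx => by
      rw [internals_cons, Walk.support_cons,
        List.dropLast_cons_of_ne_nil (Walk.support_ne_nil _)] at hx
      rcases List.mem_cons.mp hx with rfl | hx
      · refine ⟨_, _, ?_, h.symm, h', by simp [Walk.support_cons],
          by simp [Walk.support_cons]⟩
        rintro rfl
        exact ((Walk.cons_isPath_iff _ _).mp hp).2 (by simp [Walk.support_cons])
      · obtain ⟨a, b, hab, ha, hb, has, hbs⟩ :=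
          internals_two_nbrs (Walk.cons h' q) ((Walk.cons_isPath_iff _ _).mp hp).1 x
            (by rw [internals_cons]; exact hx)
        refine ⟨a, b, hab, ha, hb, ?_, ?_⟩
        · simp only [Walk.support_cons, List.mem_cons]
          right
          simpa [Walk.support_cons] using has
        · simp only [Walk.support_cons, List.mem_cons]
          right
          simpa [Walk.support_cons] using hbs

variable [Fintype V] [DecidableEq V] [DecidableRel T.Adj]

lemma degree_le_two_nbrs {x a b : V} (hab : a ≠ b)
    (ha : T.Adj x a) (hb : T.Adj x b) : 2 ≤ T.degree x := by
  have h : ({a, b} : Finset V) ⊆ T.neighborFinset x := by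
    intro y hy
    rcases Finset.mem_insert.mp hy with rfl | hy
    · exact (T.mem_neighborFinset _ _).2 ha
    · rw [Finset.mem_singleton] at hy; subst hy
      exact (T.mem_neighborFinset _ _).2 hb
  calc 2 = ({a, b} : Finset V).card := (Finset.card_pair hab).symm
  _ ≤ _ := Finset.card_le_card h
  _ = T.degree x := T.card_neighborFinset_eq_degree x

lemma exists_two_nbrs {x : V} (hx : 2 ≤ T.degree x) :
    ∃ a b : V, a ≠ b ∧ T.Adj x a ∧ T.Adj x b := by
  rw [← T.card_neighborFinset_eq_degree] at hx
  obtain ⟨a, ha, b, hb, hab⟩ := Finset.one_lt_card.mp hx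
  exact ⟨a, b, hab, (T.mem_neighborFinset _ _).1 ha, (T.mem_neighborFinset _ _).1 hb⟩

/-- internal vertices of paths are non-pendent -/
lemma two_le_degree_of_mem_internals {u v x : V}
    {p : T.Walk u v} (hp : p.IsPath) (hx : x ∈ internals p) : 2 ≤ T.degree x := by
  obtain ⟨a, b, hab, ha, hb, -, -⟩ := internals_two_nbrs p hp x hx
  exact degree_le_two_nbrs hab ha hb

/-- in a tree, a neighbour of the start lying on the path must be the second vertex -/
lemma eq_cons_of_nbr_mem_support (hT : T.IsTree) {u v w : V} {p : T.Walk u v}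
    (hp : p.IsPath) (h : T.Adj u w) (hw : w ∈ p.support) :
    p = Walk.cons h (p.dropUntil w hw) := by
  have h1 : (p.takeUntil w hw).IsPath := hp.takeUntil hw
  have h2 : (Walk.cons h (Walk.nil : T.Walk w w)).IsPath := by
    simp [Walk.cons_isPath_iff, h.ne]
  have h3 : p.takeUntil w hw = Walk.cons h Walk.nil := walk_eq hT h1 h2
  conv_lhs => rw [← p.take_spec hw]
  rw [h3]
  rfl

/-- a non-pendent start vertex has a neighbour off the path -/
lemma exists_nbr_off_support (hT : T.IsTree) {u v : V}
    {p : T.Walk u v} (hp : p.IsPath) (hu : 2 ≤ T.degree u) :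
    ∃ a : V, T.Adj u a ∧ a ∉ p.support := by
  obtain ⟨a, b, hab, ha, hb⟩ := exists_two_nbrs hu
  by_contra hcon
  push_neg at hcon
  have haS := hcon a ha
  have hbS := hcon b hb
  have e1 := eq_cons_of_nbr_mem_support hT hp ha haS
  have e2 := eq_cons_of_nbr_mem_support hT hp hb hbS
  apply hab
  have h4 : (Walk.cons ha (p.dropUntil a haS)).support
      = (Walk.cons hb (p.dropUntil b hbS)).support := by rw [← e1, ← e2]
  rw [Walk.support_cons, Walk.support_cons, (p.dropUntil a haS).support_eq_cons,
    (p.dropUntil b hbS).support_eq_cons] at h4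
  simp only [List.cons.injEq] at h4
  exact h4.2.1



lemma isPath_concat {u v b : V} {p : T.Walk u v} (hp : p.IsPath) (h : T.Adj v b)
    (hb : b ∉ p.support) : (p.concat h).IsPath := by
  rw [← Walk.isPath_reverse_iff, Walk.reverse_concat]
  rw [Walk.cons_isPath_iff]
  refine ⟨hp.reverse, ?_⟩
  rw [Walk.support_reverse, List.mem_reverse]
  exact hb

lemma exists_path_internal (hT : T.IsTree) {v : V} (hv : 2 ≤ T.degree v) :
    ∃ (a b : V) (P : T.Walk a b), P.IsPath ∧ v ∈ internals P := by
  obtain ⟨a, b, hab, ha, hb⟩ := exists_two_nbrs hv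
  refine ⟨a, b, Walk.cons ha.symm (Walk.cons hb Walk.nil), ?_, ?_⟩
  · simp [Walk.cons_isPath_iff, ha.ne', hb.ne, hab]
  · rw [internals_cons]
    simp [Walk.support_cons]

lemma exists_path_two_internal (hT : T.IsTree) {u v : V} (huv : u ≠ v)
    (hu : 2 ≤ T.degree u) (hv : 2 ≤ T.degree v) :
    ∃ (a b : V) (P : T.Walk a b), P.IsPath ∧ u ∈ internals P ∧ v ∈ internals P := by
  obtain ⟨p, hp, -⟩ := hT.isConnected.exists_path_of_dist u v
  obtain ⟨a, ha, haS⟩ := exists_nbr_off_support hT hp hu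
  obtain ⟨b, hb, hbS'⟩ := exists_nbr_off_support hT hp.reverse hv
  have hbS : b ∉ p.support := by
    rwa [Walk.support_reverse, List.mem_reverse] at hbS'
  have hab : a ≠ b := by
    rintro rfl
    have h2 : a ≠ v := fun hc => hbS (hc ▸ p.end_mem_support)
    have hQ : (Walk.cons ha (Walk.cons hb.symm Walk.nil) : T.Walk u v).IsPath := by
      rw [Walk.cons_isPath_iff]
      constructor
      · rw [Walk.cons_isPath_iff]
        exact ⟨Walk.IsPath.nil, by simp [h2]⟩
      · simp only [Walk.support_cons, Walk.support_nil, List.mem_cons, List.mem_singleton,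
          List.not_mem_nil, or_false]
        push_neg
        exact ⟨ha.ne, huv⟩
    have heq := walk_eq hT hQ hp
    apply haS
    rw [← heq]
    simp [Walk.support_cons]
  have hcp : (p.concat hb).IsPath := isPath_concat hp hb hbS
  have haS2 : a ∉ (p.concat hb).support := by
    rw [Walk.support_concat, List.mem_append]
    push_neg
    exact ⟨haS, by simp [hab]⟩
  refine ⟨a, b, Walk.cons ha.symm (p.concat hb), (Walk.cons_isPath_iff _ _).2 ⟨hcp, haS2⟩, ?_, ?_⟩ <;>
  · rw [internals_cons, Walk.support_concat, List.dropLast_concat]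
    first
      | exact p.start_mem_support
      | exact p.end_mem_support

lemma exists_path_from_with_edge (hT : T.IsTree) (x : V) {a b : V} (hab : T.Adj a b) :
    ∃ (c : V) (P : T.Walk x c), P.IsPath ∧ s(a,b) ∈ P.edges := by
  obtain ⟨p, hp, -⟩ := hT.isConnected.exists_path_of_dist x a
  by_cases hbs : b ∈ p.support
  · refine ⟨a, p, hp, ?_⟩
    have h1 : (p.dropUntil b hbs).IsPath := hp.dropUntil hbs
    have h2 : (Walk.cons hab.symm Walk.nil : T.Walk b a).IsPath := by
      simp [Walk.cons_isPath_iff, hab.ne']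
    have h3 := walk_eq hT h1 h2
    have h4 : s(a,b) ∈ (p.dropUntil b hbs).edges := by
      rw [h3]
      simp [Walk.edges_cons, Sym2.eq_swap]
    exact p.edges_dropUntil_subset hbs h4
  · refine ⟨b, p.concat hab, isPath_concat hp hab hbs, ?_⟩
    rw [Walk.edges_concat]
    simp

lemma exists_path_two_edges (hT : T.IsTree) {a b c d : V} (h1 : T.Adj a b) (h2 : T.Adj c d) :
    ∃ (x y : V) (P : T.Walk x y), P.IsPath ∧ s(a,b) ∈ P.edges ∧ s(c,d) ∈ P.edges := by
  obtain ⟨e, P, hP, hm2⟩ := exists_path_from_with_edge hT a h2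
  by_cases hb : b ∈ P.support
  · refine ⟨a, e, P, hP, ?_, hm2⟩
    rw [eq_cons_of_nbr_mem_support hT hP h1 hb]
    simp [Walk.edges_cons]
  · refine ⟨b, e, Walk.cons h1.symm P, (Walk.cons_isPath_iff _ _).2 ⟨hP, hb⟩, ?_, ?_⟩
    · simp [Walk.edges_cons, Sym2.eq_swap]
    · simp [Walk.edges_cons, hm2]

lemma exists_path_edge_internal (hT : T.IsTree) {a b v : V} (h : T.Adj a b)
    (hv : 2 ≤ T.degree v) :
    ∃ (x y : V) (P : T.Walk x y), P.IsPath ∧ s(a,b) ∈ P.edges ∧ v ∈ internals P := by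
  obtain ⟨c, P, hP, he⟩ := exists_path_from_with_edge hT v h
  obtain ⟨z, hz, hzS⟩ := exists_nbr_off_support hT hP hv
  refine ⟨z, c, Walk.cons hz.symm P, (Walk.cons_isPath_iff _ _).2 ⟨hP, hzS⟩, ?_, ?_⟩
  · simp [Walk.edges_cons, he]
  · cases P with
    | nil => simp at he
    | cons h' q =>
      rw [internals_cons, Walk.support_cons,
        List.dropLast_cons_of_ne_nil (Walk.support_ne_nil _)]
      exact List.mem_cons_self


/-- a tree path has no chords: non-consecutive support vertices are non-adjacent -/
lemma no_chord (hT : T.IsTree) {u v : V} [DecidableEq V] {p : T.Walk u v} (hp : p.IsPath)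
    {i j : ℕ} (hij : i + 1 < j) (hi : i < p.support.length) (hj : j < p.support.length)
    (hadj : T.Adj (p.support[i]'hi) (p.support[j]'hj)) : False := by
  set x := p.support[i]'hi with hxdef
  set y := p.support[j]'hj with hydef
  have hginj : ∀ {a b : Fin p.support.length}, p.support.get a = p.support.get b → a = b :=
    fun h => List.nodup_iff_injective_get.mp hp.support_nodup h
  have hx : x ∈ p.support := by rw [hxdef]; exact List.getElem_mem _
  set A := (p.takeUntil x hx).support with hAdef
  have hsup : p.support = A ++ (p.dropUntil x hx).support.tail := by
    conv_lhs => rw [← p.take_spec hx]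
    rw [Walk.support_append]
  have hAne : A ≠ [] := Walk.support_ne_nil _
  have hApos : 0 < A.length := List.length_pos_iff_ne_nil.mpr hAne
  have hAle : A.length ≤ p.support.length := by
    rw [hsup, List.length_append]; omega
  have h1 : p.support[A.length - 1]'(by omega) = x := by
    rw [List.getElem_of_eq hsup (by omega), List.getElem_append_left (by omega),
      ← List.getLast_eq_getElem hAne]
    exact Walk.getLast_support _
  have hAlen : A.length = i + 1 := by
    have h2 := hginj (a := ⟨A.length - 1, by omega⟩) (b := ⟨i, hi⟩)
      (by simp only [List.get_eq_getElem]; rw [h1])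
    have := Fin.mk.injEq (A.length - 1) _ i _ ▸ h2
    omega
  have hyB : y ∈ (p.dropUntil x hx).support.tail := by
    have hymem : y ∈ p.support := by rw [hydef]; exact List.getElem_mem _
    rw [hsup, List.mem_append] at hymem
    rcases hymem with hyA | h
    · exfalso
      obtain ⟨m, hm, hmy⟩ := List.mem_iff_getElem.mp hyA
      have hmp : p.support[m]'(by omega) = y := by
        rw [List.getElem_of_eq hsup (by omega), List.getElem_append_left hm]; exact hmy
      have h2 := hginj (a := ⟨m, by omega⟩) (b := ⟨j, hj⟩)
        (by simp only [List.get_eq_getElem]; rw [hmp])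
      have := Fin.mk.injEq m _ j _ ▸ h2
      omega
    · exact h
  have hyD : y ∈ (p.dropUntil x hx).support := by
    rw [Walk.support_eq_cons]
    exact List.mem_cons_of_mem _ hyB
  have hseg : ((p.dropUntil x hx).takeUntil y hyD).IsPath := (hp.dropUntil hx).takeUntil hyD
  have hE : (Walk.cons hadj Walk.nil : T.Walk x y).IsPath := by
    simp [Walk.cons_isPath_iff, hadj.ne]
  have heq : (p.dropUntil x hx).takeUntil y hyD = Walk.cons hadj Walk.nil := walk_eq hT hseg hE
  have hsegsup : ((p.dropUntil x hx).takeUntil y hyD).support = [x, y] := by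
    rw [heq, Walk.support_cons, Walk.support_nil]
  have hspec2 : (p.dropUntil x hx).support
      = [x, y] ++ ((p.dropUntil x hx).dropUntil y hyD).support.tail := by
    conv_lhs => rw [← (p.dropUntil x hx).take_spec hyD]
    rw [Walk.support_append, hsegsup]
  have htail : (p.dropUntil x hx).support.tail
      = y :: ((p.dropUntil x hx).dropUntil y hyD).support.tail := by
    have h5 := hspec2
    rw [(p.dropUntil x hx).support_eq_cons] at h5
    simp only [List.cons_append, List.nil_append, List.cons.injEq] at h5
    exact h5.2
  have hyidx : p.support[A.length]'(by omega) = y := by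
    rw [List.getElem_of_eq hsup (by omega), List.getElem_append_right (le_refl A.length)]
    simp only [Nat.sub_self]
    rw [List.getElem_of_eq htail (List.length_pos_iff_ne_nil.mpr (List.ne_nil_of_mem hyB))]
    simp
  have h6 := hginj (a := ⟨A.length, by omega⟩) (b := ⟨j, hj⟩)
    (by simp only [List.get_eq_getElem]; rw [hyidx])
  have := Fin.mk.injEq A.length _ j _ ▸ h6
  omega


section Values
variable {n q : ℕ}

lemma main_values [Nonempty V] (hT : T.IsTree) (hn : n = Fintype.card V)
    (hq : q = (Finset.univ.filter fun v => 2 ≤ T.degree v).card) :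
    rvc T = q ∧ srvc T = q ∧ trc T = n - 1 + q ∧ strc T = n - 1 + q := by
  classical
  set NP : Finset V := Finset.univ.filter fun v => 2 ≤ T.degree v with hNP
  have hec : T.edgeFinset.card + 1 = n := by rw [hn]; exact hT.card_edgeFinset
  -- the colourings
  set cV : V → ℕ := fun v => if h : v ∈ NP then ((NP.equivFin ⟨v, h⟩ : Fin _) : ℕ) else 0 with hcV
  set cE : Sym2 V → ℕ :=
    fun e => if h : e ∈ T.edgeFinset then q + ((T.edgeFinset.equivFin ⟨e, h⟩ : Fin _) : ℕ)
      else 0 with hcE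
  have hcV_lt : ∀ v ∈ NP, cV v < q := by
    intro v hv
    rw [hcV]; simp only [dif_pos hv]
    rw [hq]
    exact (NP.equivFin ⟨v, hv⟩).isLt
  have hcV_inj : ∀ v ∈ NP, ∀ w ∈ NP, cV v = cV w → v = w := by
    intro v hv w hw hvw
    rw [hcV] at hvw; simp only [dif_pos hv, dif_pos hw] at hvw
    have := NP.equivFin.injective (Fin.val_injective hvw)
    exact Subtype.ext_iff.mp this
  have hcE_ge : ∀ e ∈ T.edgeFinset, q ≤ cE e := by
    intro e he
    rw [hcE]; simp only [dif_pos he]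
    exact Nat.le_add_right _ _
  have hcE_lt : ∀ e ∈ T.edgeFinset, cE e < n - 1 + q := by
    intro e he
    rw [hcE]; simp only [dif_pos he]
    have := (T.edgeFinset.equivFin ⟨e, he⟩).isLt
    omega
  have hcE_inj : ∀ e ∈ T.edgeFinset, ∀ f ∈ T.edgeFinset, cE e = cE f → e = f := by
    intro e he f hf hef
    rw [hcE] at hef; simp only [dif_pos he, dif_pos hf] at hef
    have h2 : (T.edgeFinset.equivFin ⟨e, he⟩ : ℕ) = (T.edgeFinset.equivFin ⟨f, hf⟩ : ℕ) := by
      omega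
    exact Subtype.ext_iff.mp (T.edgeFinset.equivFin.injective (Fin.val_injective h2))
  -- properties of the canonical witness path
  have hwit : ∀ u v : V, ∃ p : T.Walk u v, p.IsPath ∧ p.length = T.dist u v ∧
      (∀ x ∈ internals p, x ∈ NP) ∧ (∀ e ∈ p.edges, e ∈ T.edgeFinset) := by
    intro u v
    obtain ⟨p, hp, hl⟩ := hT.isConnected.exists_path_of_dist u v
    refine ⟨p, hp, hl, ?_, ?_⟩
    · intro x hx
      rw [hNP, Finset.mem_filter]
      exact ⟨Finset.mem_univ _, two_le_degree_of_mem_internals hp hx⟩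
    · intro e he
      rw [SimpleGraph.mem_edgeFinset]
      exact p.edges_subset_edgeSet he
  -- memberships in the four defining sets
  have hmem_strc : (n - 1 + q) ∈ {k | ∃ (cE : Sym2 V → ℕ) (cV : V → ℕ), ∀ u v : V,
      ∃ p : T.Walk u v, p.IsPath ∧ p.length = T.dist u v ∧
      (p.edges.map cE ++ (internals p).map cV).Nodup ∧
      (∀ e ∈ p.edges, cE e < n - 1 + q) ∧ ∀ x ∈ internals p, cV x < n - 1 + q} := by
    refine ⟨cE, cV, fun u v => ?_⟩
    obtain ⟨p, hp, hl, hint, hedg⟩ := hwit u v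
    refine ⟨p, hp, hl, ?_, ?_, ?_⟩
    · refine List.Nodup.append ?_ ?_ ?_
      · exact List.Nodup.map_on (fun x hx y hy => hcE_inj x (hedg x hx) y (hedg y hy))
          hp.isTrail.edges_nodup
      · exact List.Nodup.map_on (fun x hx y hy => hcV_inj x (hint x hx) y (hint y hy))
          (internals_nodup hp)
      · intro x hx1 hx2
        simp only [List.mem_map] at hx1 hx2
        obtain ⟨e, he, rfl⟩ := hx1
        obtain ⟨w, hw, hcw⟩ := hx2
        have := hcE_ge e (hedg e he)
        have := hcV_lt w (hint w hw)
        omega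
    · exact fun e he => hcE_lt e (hedg e he)
    · intro x hx
      have := hcV_lt x (hint x hx)
      omega
  have hmem_srvc : q ∈ {k | ∃ c : V → ℕ, ∀ u v : V, ∃ p : T.Walk u v, p.IsPath ∧
      p.length = T.dist u v ∧ ((internals p).map c).Nodup ∧ ∀ x ∈ internals p, c x < q} := by
    refine ⟨cV, fun u v => ?_⟩
    obtain ⟨p, hp, hl, hint, -⟩ := hwit u v
    refine ⟨p, hp, hl, ?_, fun x hx => hcV_lt x (hint x hx)⟩
    exact List.Nodup.map_on (fun x hx y hy => hcV_inj x (hint x hx) y (hint y hy))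
      (internals_nodup hp)
  -- lower bounds
  have hlb_rvc : ∀ k, (∃ c : V → ℕ, ∀ u v : V, ∃ p : T.Walk u v, p.IsPath ∧
      ((internals p).map c).Nodup ∧ ∀ x ∈ internals p, c x < k) → q ≤ k := by
    rintro k ⟨c, hc⟩
    rw [hq]
    have h := Finset.card_le_card_of_injOn (s := NP) (t := Finset.range k) c ?_ ?_
    · rw [Finset.card_range] at h
      exact h
    · intro v hv
      simp only [Finset.mem_coe, hNP, Finset.mem_filter] at hv
      obtain ⟨a, b, P, hP, hvP⟩ := exists_path_internal hT hv.2
      obtain ⟨p', hp', hnd, hbd⟩ := hc a b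
      rw [walk_eq hT hp' hP] at hnd hbd
      exact Finset.mem_range.2 (hbd v hvP)
    · intro v hv w hw hvw
      simp only [Finset.mem_coe, hNP, Finset.mem_filter] at hv hw
      by_contra hne
      obtain ⟨a, b, P, hP, hvP, hwP⟩ := exists_path_two_internal hT hne hv.2 hw.2
      obtain ⟨p', hp', hnd, hbd⟩ := hc a b
      rw [walk_eq hT hp' hP] at hnd hbd
      exact hne (List.inj_on_of_nodup_map hnd hvP hwP hvw)
  have hlb_trc : ∀ k, (∃ (cE' : Sym2 V → ℕ) (cV' : V → ℕ), ∀ u v : V,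
      ∃ p : T.Walk u v, p.IsPath ∧ (p.edges.map cE' ++ (internals p).map cV').Nodup ∧
      (∀ e ∈ p.edges, cE' e < k) ∧ ∀ x ∈ internals p, cV' x < k) → n - 1 + q ≤ k := by
    rintro k ⟨cE', cV', hc⟩
    have hcard : (T.edgeFinset.disjSum NP).card = n - 1 + q := by
      rw [Finset.card_disjSum, hq, hNP]
      omega
    rw [← hcard]
    have h := Finset.card_le_card_of_injOn (s := T.edgeFinset.disjSum NP)
      (t := Finset.range k) (Sum.elim cE' cV') ?_ ?_
    · rw [Finset.card_range] at h
      exact h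
    · rintro (e | v) hx
      · rw [Finset.mem_coe, Finset.inl_mem_disjSum] at hx
        have hx' := hx
        rw [SimpleGraph.mem_edgeFinset] at hx'
        induction e with
        | _ a b =>
          obtain ⟨z, P, hP, heP⟩ := exists_path_from_with_edge hT a hx'
          obtain ⟨p', hp', hnd, hbd, -⟩ := hc a z
          rw [walk_eq hT hp' hP] at hnd hbd
          exact Finset.mem_range.2 (hbd _ heP)
      · rw [Finset.mem_coe, Finset.inr_mem_disjSum, hNP, Finset.mem_filter] at hx
        obtain ⟨a, b, P, hP, hvP⟩ := exists_path_internal hT hx.2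
        obtain ⟨p', hp', hnd, -, hbd⟩ := hc a b
        rw [walk_eq hT hp' hP] at hnd hbd
        exact Finset.mem_range.2 (hbd v hvP)
    · rintro (e | v) hx (f | w) hy hxy <;>
        simp only [Finset.mem_coe, Finset.inl_mem_disjSum, Finset.inr_mem_disjSum] at hx hy
      · -- two edges
        simp only [Sum.elim_inl] at hxy
        congr 1
        by_contra hne
        rw [SimpleGraph.mem_edgeFinset] at hx hy
        induction e with
        | _ a b =>
          induction f with
          | _ c d =>
            obtain ⟨x, y, P, hP, he1, he2⟩ := exists_path_two_edges hT hx hy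
            obtain ⟨p', hp', hnd, -, -⟩ := hc x y
            rw [walk_eq hT hp' hP] at hnd
            exact hne (List.inj_on_of_nodup_map hnd.of_append_left he1 he2 hxy)
      · -- edge vs vertex : impossible
        exfalso
        simp only [Sum.elim_inl, Sum.elim_inr] at hxy
        rw [SimpleGraph.mem_edgeFinset] at hx
        rw [hNP, Finset.mem_filter] at hy
        induction e with
        | _ a b =>
          obtain ⟨x, y, P, hP, heP, hwP⟩ := exists_path_edge_internal hT hx hy.2
          obtain ⟨p', hp', hnd, -, -⟩ := hc x y
          rw [walk_eq hT hp' hP] at hnd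
          exact List.disjoint_of_nodup_append hnd
            (List.mem_map_of_mem (f := cE') heP) (hxy ▸ List.mem_map_of_mem (f := cV') hwP)
      · -- vertex vs edge : impossible
        exfalso
        simp only [Sum.elim_inl, Sum.elim_inr] at hxy
        rw [SimpleGraph.mem_edgeFinset] at hy
        rw [hNP, Finset.mem_filter] at hx
        induction f with
        | _ a b =>
          obtain ⟨x, y, P, hP, heP, hwP⟩ := exists_path_edge_internal hT hy hx.2
          obtain ⟨p', hp', hnd, -, -⟩ := hc x y
          rw [walk_eq hT hp' hP] at hnd
          exact List.disjoint_of_nodup_append hnd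
            (List.mem_map_of_mem (f := cE') heP) (hxy ▸ List.mem_map_of_mem (f := cV') hwP)
      · -- two vertices
        simp only [Sum.elim_inr] at hxy
        congr 1
        rw [hNP, Finset.mem_filter] at hx hy
        by_contra hne
        obtain ⟨a, b, P, hP, hvP, hwP⟩ := exists_path_two_internal hT hne hx.2 hy.2
        obtain ⟨p', hp', hnd, -, -⟩ := hc a b
        rw [walk_eq hT hp' hP] at hnd
        exact hne (List.inj_on_of_nodup_map (hnd.of_append_right) hvP hwP hxy)
  -- conclude
  have h1 : srvc T = q := le_antisymm (Nat.sInf_le hmem_srvc)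
    (le_csInf ⟨q, hmem_srvc⟩ (fun k hk => by
      obtain ⟨c, hc⟩ := hk
      exact hlb_rvc k ⟨c, fun u v => by
        obtain ⟨p, hp, -, hnd, hbd⟩ := hc u v
        exact ⟨p, hp, hnd, hbd⟩⟩))
  have h2 : rvc T = q := by
    have hmem : q ∈ {k | ∃ c : V → ℕ, ∀ u v : V, ∃ p : T.Walk u v, p.IsPath ∧
        ((internals p).map c).Nodup ∧ ∀ x ∈ internals p, c x < k} := by
      obtain ⟨c, hc⟩ := hmem_srvc
      exact ⟨c, fun u v => by
        obtain ⟨p, hp, -, hnd, hbd⟩ := hc u v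
        exact ⟨p, hp, hnd, hbd⟩⟩
    exact le_antisymm (Nat.sInf_le hmem) (le_csInf ⟨q, hmem⟩ (fun k hk => hlb_rvc k hk))
  have h3 : strc T = n - 1 + q := le_antisymm (Nat.sInf_le hmem_strc)
    (le_csInf ⟨_, hmem_strc⟩ (fun k hk => by
      obtain ⟨cE', cV', hc⟩ := hk
      exact hlb_trc k ⟨cE', cV', fun u v => by
        obtain ⟨p, hp, -, hnd, hbd⟩ := hc u v
        exact ⟨p, hp, hnd, hbd⟩⟩))
  have h4 : trc T = n - 1 + q := by
    have hmem : (n - 1 + q) ∈ {k | ∃ (cE : Sym2 V → ℕ) (cV : V → ℕ), ∀ u v : V,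
        ∃ p : T.Walk u v, p.IsPath ∧ (p.edges.map cE ++ (internals p).map cV).Nodup ∧
        (∀ e ∈ p.edges, cE e < k) ∧ ∀ x ∈ internals p, cV x < k} := by
      obtain ⟨cE', cV', hc⟩ := hmem_strc
      exact ⟨cE', cV', fun u v => by
        obtain ⟨p, hp, -, hnd, hbd⟩ := hc u v
        exact ⟨p, hp, hnd, hbd⟩⟩
    exact le_antisymm (Nat.sInf_le hmem) (le_csInf ⟨_, hmem⟩ (fun k hk => hlb_trc k hk))
  exact ⟨h2, h1, h4, h3⟩

end Values
section PathIso
variable [Fintype V] [DecidableEq V] [DecidableRel T.Adj]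

lemma degree_pos (hT : T.IsTree) (h2 : 2 ≤ Fintype.card V) (v : V) : 0 < T.degree v := by
  obtain ⟨w, hw⟩ := Fintype.exists_ne_of_one_lt_card (by omega) v
  obtain ⟨p⟩ := hT.isConnected v w
  cases p with
  | nil => exact absurd rfl hw
  | cons h q => exact (T.degree_pos_iff_exists_adj v).mpr ⟨_, h⟩

lemma nbr_mem_support_of_endpoint {x y b : V} (p : T.Walk x y) (hxy : x ≠ y)
    (hdx : T.degree x = 1) (hb : T.Adj x b) : b ∈ p.support := by
  cases p with
  | nil => exact absurd rfl hxy
  | cons h q =>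
    have h1 : b ∈ T.neighborFinset x := (T.mem_neighborFinset _ _).2 hb
    have h2 : _ ∈ T.neighborFinset x := (T.mem_neighborFinset _ _).2 h
    have hle : (T.neighborFinset x).card ≤ 1 := by
      rw [T.card_neighborFinset_eq_degree, hdx]
    have hbe := Finset.card_le_one.mp hle _ h1 _ h2
    rw [hbe, Walk.support_cons]
    exact List.mem_cons_of_mem _ (Walk.start_mem_support _)

lemma support_closed_reach {x y : V} {p : T.Walk x y}
    (hcl : ∀ a ∈ p.support, ∀ b, T.Adj a b → b ∈ p.support) :
    ∀ {s t : V}, (w : T.Walk s t) → s ∈ p.support → t ∈ p.support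
  | _, _, Walk.nil, hs => hs
  | _, _, Walk.cons h w, hs => support_closed_reach hcl w (hcl _ hs _ h)

lemma path_iso (hT : T.IsTree) {n q : ℕ} (hn : n = Fintype.card V) (hn2 : 2 ≤ n)
    (hq : q = (Finset.univ.filter fun v => 2 ≤ T.degree v).card) (hqn : q = n - 2) :
    Nonempty (T ≃g pathGraph n) := by
  classical
  set L := Finset.univ.filter (fun v => ¬ 2 ≤ T.degree v) with hL
  have hdeg1 : ∀ v ∈ L, T.degree v = 1 := by
    intro v hv
    rw [hL, Finset.mem_filter] at hv
    have := degree_pos hT (by omega) v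
    omega
  have hcards : q + L.card = n := by
    rw [hq, hL, hn]
    exact Finset.card_filter_add_card_filter_not _
  have hLcard : L.card = 2 := by omega
  have hsum : ∑ v, T.degree v = 2 * (n - 1) := by
    rw [T.sum_degrees_eq_twice_card_edges]
    have h3 := hT.card_edgeFinset
    rw [← hn] at h3
    omega
  have hsplit := Finset.sum_filter_add_sum_filter_not Finset.univ
    (fun v => 2 ≤ T.degree v) (fun v => T.degree v)
  have hsumL : ∑ v ∈ L, T.degree v = 2 := by
    rw [Finset.sum_congr rfl hdeg1, Finset.sum_const, smul_eq_mul, mul_one, hLcard]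
  have hdeg2 : ∀ v, 2 ≤ T.degree v → T.degree v = 2 := by
    by_contra hcon
    push_neg at hcon
    obtain ⟨v0, hv0, hne⟩ := hcon
    have hlt : ∑ _v ∈ Finset.univ.filter (fun v => 2 ≤ T.degree v), 2
        < ∑ v ∈ Finset.univ.filter (fun v => 2 ≤ T.degree v), T.degree v := by
      refine Finset.sum_lt_sum (fun i hi => (Finset.mem_filter.mp hi).2) ?_
      exact ⟨v0, Finset.mem_filter.mpr ⟨Finset.mem_univ _, hv0⟩,
        lt_of_le_of_ne hv0 (Ne.symm hne)⟩
    rw [Finset.sum_const, smul_eq_mul, ← hq] at hlt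
    rw [← hL] at hsplit
    omega
  obtain ⟨x, y, hxy, hLxy⟩ := Finset.card_eq_two.mp hLcard
  have hdx : T.degree x = 1 := hdeg1 x (by rw [hLxy]; simp)
  have hdy : T.degree y = 1 := hdeg1 y (by rw [hLxy]; simp)
  obtain ⟨P, hP, -⟩ := hT.isConnected.exists_path_of_dist x y
  have hcl : ∀ a ∈ P.support, ∀ b, T.Adj a b → b ∈ P.support := by
    intro a ha b hb
    by_cases hax : a = x
    · subst hax
      exact nbr_mem_support_of_endpoint P hxy hdx hb
    by_cases hay : a = y
    · subst hay
      have h5 := nbr_mem_support_of_endpoint P.reverse (Ne.symm hxy) hdy hb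
      rwa [Walk.support_reverse, List.mem_reverse] at h5
    · have hin : a ∈ internals P := mem_internals ha hax hay
      obtain ⟨c, d, hcd, hc, hd, hcs, hds⟩ := internals_two_nbrs P hP a hin
      have hdeg : T.degree a = 2 := hdeg2 a (degree_le_two_nbrs hcd hc hd)
      have hsub : ({c, d} : Finset V) ⊆ T.neighborFinset a := by
        intro z hz
        rcases Finset.mem_insert.mp hz with rfl | hz
        · exact (T.mem_neighborFinset _ _).2 hc
        · rw [Finset.mem_singleton] at hz
          subst hz
          exact (T.mem_neighborFinset _ _).2 hd
      have hset : ({c, d} : Finset V) = T.neighborFinset a := by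
        refine Finset.eq_of_subset_of_card_le hsub ?_
        rw [T.card_neighborFinset_eq_degree, hdeg, Finset.card_pair hcd]
      have hbm : b ∈ ({c, d} : Finset V) := by
        rw [hset]
        exact (T.mem_neighborFinset _ _).2 hb
      rcases Finset.mem_insert.mp hbm with rfl | hbm
      · exact hcs
      · rw [Finset.mem_singleton] at hbm
        subst hbm
        exact hds
  have hcover : ∀ v : V, v ∈ P.support := by
    intro v
    obtain ⟨w⟩ := hT.isConnected x v
    exact support_closed_reach hcl w P.start_mem_support
  have hslen : P.support.length = n := by
    have h1 : P.support.toFinset = Finset.univ :=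
      Finset.eq_univ_iff_forall.mpr (fun v => List.mem_toFinset.mpr (hcover v))
    have h2 := List.toFinset_card_of_nodup hP.support_nodup
    rw [h1, Finset.card_univ] at h2
    omega
  let f : Fin n → V := fun i => P.support[(i : ℕ)]'(by rw [hslen]; exact i.isLt)
  have hinj : Function.Injective f := by
    intro a b hab
    have ha' : (a : ℕ) < P.support.length := by rw [hslen]; exact a.isLt
    have hb' : (b : ℕ) < P.support.length := by rw [hslen]; exact b.isLt
    have h6 : (⟨(a : ℕ), ha'⟩ : Fin P.support.length) = ⟨(b : ℕ), hb'⟩ :=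
      List.nodup_iff_injective_get.mp hP.support_nodup
        (by simpa [List.get_eq_getElem] using hab)
    exact Fin.ext (by simpa using congrArg Fin.val h6)
  have hbij : Function.Bijective f :=
    (Fintype.bijective_iff_injective_and_card f).mpr ⟨hinj, by simp [hn]⟩
  have key : ∀ i j : Fin n, T.Adj (f i) (f j) ↔ (pathGraph n).Adj i j := by
    intro i j
    constructor
    · intro h
      rw [pathGraph_adj]
      rcases lt_trichotomy (i : ℕ) (j : ℕ) with hlt | heq | hgt
      · left
        by_contra hne
        exact no_chord hT hP (i := (i : ℕ)) (j := (j : ℕ)) (by omega) (by rw [hslen]; exact i.isLt)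
          (by rw [hslen]; exact j.isLt) h
      · exfalso
        have hij : i = j := Fin.ext heq
        subst hij
        exact T.irrefl h
      · right
        by_contra hne
        exact no_chord hT hP (i := (j : ℕ)) (j := (i : ℕ)) (by omega) (by rw [hslen]; exact j.isLt)
          (by rw [hslen]; exact i.isLt) h.symm
    · intro h
      rw [pathGraph_adj] at h
      have hchain := Walk.isChain_adj_support P
      rcases h with h | h
      · have h7 := List.isChain_iff_getElem.mp hchain (i : ℕ) (by omega)
        have hj : (j : ℕ) = (i : ℕ) + 1 := h.symm
        show T.Adj (P.support[(i : ℕ)]'_) (P.support[(j : ℕ)]'_)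
        convert h7 using 2 <;> omega
      · have h7 := List.isChain_iff_getElem.mp hchain (j : ℕ) (by omega)
        have hi : (i : ℕ) = (j : ℕ) + 1 := h.symm
        refine Adj.symm ?_
        show T.Adj (P.support[(j : ℕ)]'_) (P.support[(i : ℕ)]'_)
        convert h7 using 2 <;> omega
  exact ⟨(RelIso.mk (Equiv.ofBijective f hbij) (fun {i j} => key i j)).symm⟩

end PathIso

section Chars
variable [Fintype V] [DecidableEq V] [DecidableRel T.Adj]

lemma NP_card_of_iso {n : ℕ} (φ : T ≃g pathGraph n) (hn2 : 2 ≤ n) :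
    (Finset.univ.filter fun v => 2 ≤ T.degree v).card = n - 2 := by
  classical
  have hdeg_iff : ∀ v : V, 2 ≤ T.degree v ↔ (0 < (φ v : ℕ) ∧ (φ v : ℕ) < n - 1) := by
    intro v
    constructor
    · intro hv
      obtain ⟨a, b, hab, ha, hb⟩ := exists_two_nbrs hv
      have ha' := pathGraph_adj.mp (φ.map_rel_iff.mpr ha)
      have hb' := pathGraph_adj.mp (φ.map_rel_iff.mpr hb)
      have hne : (φ a : ℕ) ≠ (φ b : ℕ) := fun h => hab (φ.injective (Fin.ext h))
      have h1 : (φ a : ℕ) < n := (φ a).isLt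
      have h2 : (φ b : ℕ) < n := (φ b).isLt
      omega
    · rintro ⟨h0, h1⟩
      have hvn : (φ v : ℕ) < n := (φ v).isLt
      refine degree_le_two_nbrs (a := φ.symm ⟨(φ v : ℕ) - 1, by omega⟩)
        (b := φ.symm ⟨(φ v : ℕ) + 1, by omega⟩) ?_ ?_ ?_
      · intro h
        have h2 := congrArg Fin.val (φ.symm.injective h)
        simp only [] at h2
        omega
      · rw [← φ.map_rel_iff, φ.apply_symm_apply, pathGraph_adj]
        right
        show ((φ v : ℕ) - 1) + 1 = (φ v : ℕ)
        omega
      · rw [← φ.map_rel_iff, φ.apply_symm_apply, pathGraph_adj]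
        left
        rfl
  have step1 : (Finset.univ.filter fun v => 2 ≤ T.degree v).card
      = (Finset.univ.filter fun i : Fin n => 0 < (i : ℕ) ∧ (i : ℕ) < n - 1).card := by
    refine Finset.card_nbij (fun v => φ v) ?_ ?_ ?_
    · intro a ha
      simp only [Finset.mem_coe, Finset.mem_filter] at ha ⊢
      exact ⟨Finset.mem_univ _, (hdeg_iff a).1 ha.2⟩
    · exact fun a _ b _ h => φ.injective h
    · intro j hj
      simp only [Finset.mem_coe, Finset.mem_filter, Finset.mem_univ, true_and] at hj
      refine ⟨φ.symm j, ?_, φ.apply_symm_apply j⟩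
      simp only [Finset.mem_coe, Finset.mem_filter, Finset.mem_univ, true_and]
      rw [hdeg_iff, φ.apply_symm_apply]
      exact hj
  have step2 : (Finset.univ.filter fun i : Fin n => 0 < (i : ℕ) ∧ (i : ℕ) < n - 1).card
      = (Finset.Ioo 0 (n - 1)).card := by
    refine Finset.card_nbij (fun i => (i : ℕ)) ?_ ?_ ?_
    · intro a ha
      simp only [Finset.mem_coe, Finset.mem_filter] at ha
      simp only [Finset.mem_coe, Finset.mem_Ioo]
      exact ha.2
    · exact fun a _ b _ h => Fin.ext h
    · intro m hm
      simp only [Finset.mem_coe, Finset.mem_Ioo] at hm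
      refine ⟨⟨m, by omega⟩, ?_, rfl⟩
      simp only [Finset.mem_coe, Finset.mem_filter, Finset.mem_univ, true_and]
      exact hm
  rw [step1, step2, Nat.card_Ioo]
  omega

lemma star_q (hT : T.IsTree) {n : ℕ} (hn : n = Fintype.card V) (hn3 : 3 ≤ n)
    (hstar : ∃ v : V, ∀ w : V, w ≠ v → T.Adj v w) :
    (Finset.univ.filter fun v => 2 ≤ T.degree v).card = 1 := by
  obtain ⟨v, hv⟩ := hstar
  have hvNP : 2 ≤ T.degree v := by
    have hcard : 2 ≤ (Finset.univ.erase v).card := by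
      rw [Finset.card_erase_of_mem (Finset.mem_univ v), Finset.card_univ]
      omega
    obtain ⟨a, ha, b, hb, hab⟩ := Finset.one_lt_card.mp hcard
    exact degree_le_two_nbrs hab (hv a (Finset.mem_erase.mp ha).1)
      (hv b (Finset.mem_erase.mp hb).1)
  have hwNP : ∀ w : V, w ≠ v → ¬ 2 ≤ T.degree w := by
    intro w hw hcon
    obtain ⟨a, b, hab, ha, hb⟩ := exists_two_nbrs hcon
    have key : ∀ z : V, T.Adj w z → z ≠ v → False := by
      intro z hz hzv
      have hW1 : (Walk.cons (hv z hzv) Walk.nil : T.Walk v z).IsPath := by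
        simp [Walk.cons_isPath_iff, (hv z hzv).ne]
      have hW2 : (Walk.cons (hv w hw) (Walk.cons hz Walk.nil) : T.Walk v z).IsPath := by
        rw [Walk.cons_isPath_iff]
        refine ⟨by simp [Walk.cons_isPath_iff, hz.ne], ?_⟩
        simp only [Walk.support_cons, Walk.support_nil, List.mem_cons, List.mem_singleton,
          List.not_mem_nil, or_false]
        push_neg
        exact ⟨(hv w hw).ne, fun h => hzv h.symm⟩
      have := congrArg Walk.length (walk_eq hT hW1 hW2)
      simp at this
    by_cases hav : a = v
    · subst hav
      exact key b hb (fun h => hab (h ▸ rfl))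
    · exact key a ha hav
  rw [Finset.card_eq_one]
  refine ⟨v, ?_⟩
  ext w
  rw [Finset.mem_filter, Finset.mem_singleton]
  constructor
  · rintro ⟨-, h2⟩
    by_contra hwv
    exact hwNP w hwv h2
  · rintro rfl
    exact ⟨Finset.mem_univ _, hvNP⟩

lemma star_of_q1 (hT : T.IsTree) {n : ℕ} (hn : n = Fintype.card V) (hn3 : 3 ≤ n)
    (hq1 : (Finset.univ.filter fun v => 2 ≤ T.degree v).card = 1) :
    ∃ v : V, ∀ w : V, w ≠ v → T.Adj v w := by
  obtain ⟨v, hv⟩ := Finset.card_eq_one.mp hq1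
  have hdeg : ∀ w : V, w ≠ v → T.degree w = 1 := by
    intro w hw
    have h1 : w ∉ Finset.univ.filter fun v => 2 ≤ T.degree v := by
      rw [hv, Finset.mem_singleton]
      exact hw
    rw [Finset.mem_filter] at h1
    push_neg at h1
    have h2 := h1 (Finset.mem_univ _)
    have h3 := degree_pos hT (by omega) w
    omega
  refine ⟨v, ?_⟩
  intro w hw
  obtain ⟨u, hu⟩ := Finset.card_eq_one.mp
    (by rw [T.card_neighborFinset_eq_degree, hdeg w hw] :
      (T.neighborFinset w).card = 1)
  have hadjwu : T.Adj w u := by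
    have : u ∈ T.neighborFinset w := by rw [hu]; exact Finset.mem_singleton_self _
    exact (T.mem_neighborFinset _ _).1 this
  by_cases huv : u = v
  · exact (huv ▸ hadjwu).symm
  · exfalso
    obtain ⟨z, hz⟩ := Finset.card_eq_one.mp
      (by rw [T.card_neighborFinset_eq_degree, hdeg u huv] :
        (T.neighborFinset u).card = 1)
    have hzw : z = w := by
      have : w ∈ T.neighborFinset u := (T.mem_neighborFinset _ _).2 hadjwu.symm
      rw [hz, Finset.mem_singleton] at this
      exact this.symm
    rw [hzw] at hz
    obtain ⟨p, hp, -⟩ := hT.isConnected.exists_path_of_dist w v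
    cases p with
    | nil => exact hw rfl
    | cons h1 r =>
      rename_i s
      have hsu : s = u := by
        have : s ∈ T.neighborFinset w := (T.mem_neighborFinset _ _).2 h1
        rw [hu, Finset.mem_singleton] at this
        exact this
      rw [← hsu] at hz huv
      cases r with
      | nil => exact huv rfl
      | cons h2 r2 =>
        rename_i t
        have htw : t = w := by
          have : t ∈ T.neighborFinset s := (T.mem_neighborFinset _ _).2 h2
          rw [hz, Finset.mem_singleton] at this
          exact this
        subst htw
        have := hp.support_nodup
        rw [Walk.support_cons, Walk.support_cons, List.nodup_cons] at this
        exact this.1 (by simp [Walk.support_cons])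

end Chars


/-- Let `T` be a tree with `n ≥ 2` vertices and `q` non-pendent vertices. Then
`rvc(T) = srvc(T) = q` and `trc(T) = strc(T) = n - 1 + q`. In particular, for `n ≥ 2`,
`rvc(T) = srvc(T) = n - 2` (equivalently `trc(T) = strc(T) = 2n - 3`) if and only if `T` is
a path; and for `n ≥ 3`, `rvc(T) = srvc(T) = 1` (equivalently `trc(T) = strc(T) = n`) if and
only if `T` is a star (a tree with one vertex adjacent to all others). -/
theorem tree_rainbow_parameters {V : Type*} [Fintype V] [DecidableEq V]
    (T : SimpleGraph V) [DecidableRel T.Adj] (hT : T.IsTree)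
    (n q : ℕ) (hn : n = Fintype.card V) (hn2 : 2 ≤ n)
    (hq : q = (Finset.univ.filter fun v => 2 ≤ T.degree v).card) :
    rvc T = q ∧ srvc T = q ∧ trc T = n - 1 + q ∧ strc T = n - 1 + q ∧
    ((rvc T = n - 2 ∧ srvc T = n - 2 ∧ trc T = 2 * n - 3 ∧ strc T = 2 * n - 3) ↔
      Nonempty (T ≃g SimpleGraph.pathGraph n)) ∧
    (3 ≤ n → ((rvc T = 1 ∧ srvc T = 1 ∧ trc T = n ∧ strc T = n) ↔
      ∃ v : V, ∀ w : V, w ≠ v → T.Adj v w)) := by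
  haveI hne : Nonempty V := Fintype.card_pos_iff.mp (by omega)
  obtain ⟨h1, h2, h3, h4⟩ := main_values hT hn hq
  refine ⟨h1, h2, h3, h4, ?_, ?_⟩
  · constructor
    · rintro ⟨ha, -, -, -⟩
      exact path_iso hT hn hn2 hq (by omega)
    · rintro ⟨φ⟩
      have hq2 : q = n - 2 := by rw [hq]; exact NP_card_of_iso φ hn2
      exact ⟨by omega, by omega, by omega, by omega⟩
  · intro hn3
    constructor
    · rintro ⟨ha, -, -, -⟩
      exact star_of_q1 hT hn hn3 (by omega)
    · intro hstar
      have hq1 : (Finset.univ.filter fun v => 2 ≤ T.degree v).card = 1 :=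
        star_q hT hn hn3 hstar
      exact ⟨by omega, by omega, by omega, by omega⟩


end RainbowConn
end

section
/- strc(W_3) = 1, and for every n ≥ 4, strc(W_n) = ⌈n/3⌉ + 1. -/
/- Definitions of the six rainbow connection parameters.

A colouring with (at most) `k` colours uses colours from `{0, ..., k-1}`.
Following the usual convention in the literature, only the colours appearing
on the edges / internal vertices of the witnessing paths are required to lie
in the palette; this yields e.g. `rvc(G) = 0` for complete graphs `G`. -/

namespace RainbowConn

variable {V : Type*}

open SimpleGraph


/-- The wheel `W_n`: the graph obtained from the cycle `C_n` by adding a new vertex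
(the centre, here `none`) joined to every vertex of `C_n`. -/
def wheelGraph (n : ℕ) : SimpleGraph (Option (Fin n)) :=
  SimpleGraph.fromRel fun a b =>
    a = none ∨ ∃ i j : Fin n, a = some i ∧ b = some j ∧ (SimpleGraph.cycleGraph n).Adj i j

lemma val_sub_cases {n : ℕ} (A B : Fin n) :
    (A.val ≤ B.val ∧ (B - A).val = B.val - A.val) ∨
    (B.val < A.val ∧ (B - A).val = n - (A.val - B.val)) := by
  have hA := A.isLt
  have h : (B - A).val = (n - A.val + B.val) % n := by rw [Fin.sub_def]
  rcases le_or_gt A.val B.val with hle | hlt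
  · have hB := B.isLt
    refine Or.inl ⟨hle, ?_⟩
    rw [h]
    have : n - A.val + B.val = n + (B.val - A.val) := by omega
    rw [this, Nat.add_mod_left, Nat.mod_eq_of_lt (by omega)]
  · refine Or.inr ⟨hlt, ?_⟩
    rw [h, Nat.mod_eq_of_lt (by omega)]
    omega

lemma wheel_adj_none {n : ℕ} (i : Fin n) : (wheelGraph n).Adj none (some i) := by
  rw [wheelGraph, SimpleGraph.fromRel_adj]
  exact ⟨by simp, Or.inl (Or.inl rfl)⟩

lemma wheel_adj_some {n : ℕ} {i j : Fin n} :
    (wheelGraph n).Adj (some i) (some j) ↔ (cycleGraph n).Adj i j := by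
  rw [wheelGraph, SimpleGraph.fromRel_adj]
  constructor
  · rintro ⟨hne, (⟨h | ⟨a, b, ha, hb, hab⟩⟩ | ⟨h | ⟨a, b, ha, hb, hab⟩⟩)⟩
    · simp at h
    · cases ha; cases hb; exact hab
    · simp at h
    · cases ha; cases hb; exact hab.symm
  · intro h
    exact ⟨by simpa using h.ne, Or.inl (Or.inr ⟨i, j, rfl, rfl, h⟩)⟩

/-- adjacency characterised by value of difference -/
lemma cycle_adj_val {n : ℕ} (hn : 3 ≤ n) {i j : Fin n} :
    (cycleGraph n).Adj i j ↔ (j - i).val = 1 ∨ (j - i).val = n - 1 := by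
  rw [cycleGraph_adj']
  have h1 := val_sub_cases i j
  have h2 := val_sub_cases j i
  have hi := i.isLt
  have hj := j.isLt
  constructor
  · rintro (h | h) <;> omega
  · rintro (h | h) <;> omega

lemma cycle_adj_of_val_succ {n : ℕ} (hn : 3 ≤ n) {i j : Fin n} (h : j.val = i.val + 1) :
    (cycleGraph n).Adj i j := by
  rw [cycle_adj_val hn]
  have h1 := val_sub_cases i j
  have hj := j.isLt
  omega

lemma walk_length_two {V : Type*} {G : SimpleGraph V} {u v : V} (p : G.Walk u v)
    (h : p.length = 2) :
    ∃ (w : V) (h1 : G.Adj u w) (h2 : G.Adj w v),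
      p = SimpleGraph.Walk.cons h1 (SimpleGraph.Walk.cons h2 SimpleGraph.Walk.nil) := by
  cases p with
  | nil => simp at h
  | cons h1 q =>
    cases q with
    | nil => simp at h
    | cons h2 r =>
      cases r with
      | nil => exact ⟨_, h1, h2, rfl⟩
      | cons h3 s => simp [SimpleGraph.Walk.length_cons] at h

/-- distance between two non-adjacent distinct vertices of the wheel is 2 -/
lemma wheel_dist_two {n : ℕ} {i j : Fin n} (hne : i ≠ j)
    (hnadj : ¬ (cycleGraph n).Adj i j) :
    (wheelGraph n).dist (some i) (some j) = 2 := by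
  have hle : (wheelGraph n).dist (some i) (some j) ≤ 2 := by
    have := SimpleGraph.dist_le (SimpleGraph.Walk.cons ((wheel_adj_none i).symm)
      (SimpleGraph.Walk.cons (wheel_adj_none j) SimpleGraph.Walk.nil))
    simpa using this
  have hr : (wheelGraph n).Reachable (some i) (some j) :=
    ⟨SimpleGraph.Walk.cons ((wheel_adj_none i).symm)
      (SimpleGraph.Walk.cons (wheel_adj_none j) SimpleGraph.Walk.nil)⟩
  have h0 : (wheelGraph n).dist (some i) (some j) ≠ 0 := by
    have := hr.pos_dist_of_ne (by simpa using hne)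
    omega
  have h1 : (wheelGraph n).dist (some i) (some j) ≠ 1 := by
    intro h
    exact hnadj (wheel_adj_some.mp (SimpleGraph.dist_eq_one_iff_adj.mp h))
  omega


def wcolE (n : ℕ) : Option (Fin n) → Option (Fin n) → ℕ
  | some a, some b => min a.val b.val % 3
  | some a, none => a.val / 3
  | none, some b => b.val / 3
  | none, none => 0

lemma wcolE_symm (n : ℕ) (a b : Option (Fin n)) : wcolE n a b = wcolE n b a := by
  cases a <;> cases b <;> simp [wcolE, Nat.min_comm]

lemma wcolE_lt {n : ℕ} (hn : 4 ≤ n) (x y : Option (Fin n)) :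
    wcolE n x y < (n + 2) / 3 + 1 := by
  have h2 : 2 ≤ (n + 2) / 3 := by omega
  cases x with
  | none => cases y with
    | none => simp [wcolE]
    | some b => have := b.isLt; simp only [wcolE]; omega
  | some a => cases y with
    | none => have := a.isLt; simp only [wcolE]; omega
    | some b => have : min a.val b.val % 3 < 3 := Nat.mod_lt _ (by omega); simp only [wcolE]; omega

lemma wheel_upper (n : ℕ) (hn : 4 ≤ n) :
    ∃ (cE : Sym2 (Option (Fin n)) → ℕ) (cV : Option (Fin n) → ℕ),
      ∀ u v, ∃ p : (wheelGraph n).Walk u v, p.IsPath ∧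
        p.length = (wheelGraph n).dist u v ∧
        (p.edges.map cE ++ (internals p).map cV).Nodup ∧
        (∀ e ∈ p.edges, cE e < (n+2)/3+1) ∧ ∀ x ∈ internals p, cV x < (n+2)/3+1 := by
  have h2 : 2 ≤ (n + 2) / 3 := by omega
  refine ⟨Sym2.lift ⟨wcolE n, wcolE_symm n⟩, fun v => v.elim ((n+2)/3) (fun _ => 2), ?_⟩
  intro u v
  by_cases huv : u = v
  · subst huv
    exact ⟨SimpleGraph.Walk.nil, SimpleGraph.Walk.IsPath.nil, by simp [SimpleGraph.dist_self], by simp [internals],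
      by simp, by simp [internals]⟩
  by_cases hadj : (wheelGraph n).Adj u v
  · refine ⟨SimpleGraph.Walk.cons hadj SimpleGraph.Walk.nil, ?_, ?_, ?_, ?_, ?_⟩
    · simp [SimpleGraph.Walk.isPath_def, hadj.ne]
    · simp [SimpleGraph.dist_eq_one_iff_adj.mpr hadj]
    · simp [internals]
    · intro e he
      simp at he
      subst he
      simpa using wcolE_lt hn u v
    · simp [internals]
  -- both are `some`
  obtain ⟨i, rfl⟩ : ∃ i, u = some i := by
    cases u with
    | none =>
      exfalso
      cases v with
      | none => exact huv rfl
      | some j => exact hadj (wheel_adj_none j)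
    | some i => exact ⟨i, rfl⟩
  obtain ⟨j, rfl⟩ : ∃ j, v = some j := by
    cases v with
    | none => exact absurd (wheel_adj_none i).symm hadj
    | some j => exact ⟨j, rfl⟩
  have hne : i ≠ j := fun h => huv (by rw [h])
  have hnadj : ¬ (cycleGraph n).Adj i j := fun h => hadj (wheel_adj_some.mpr h)
  have hdist := wheel_dist_two hne hnadj
  have hvne : i.val ≠ j.val := fun h => hne (Fin.val_injective h)
  have hi := i.isLt
  have hj := j.isLt
  by_cases hg : i.val / 3 = j.val / 3
  · -- same group of three: vertices differ by 2, go around the rim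
    have hd : j.val = i.val + 2 ∨ i.val = j.val + 2 := by
      have c1 : j.val ≠ i.val + 1 := fun h => hnadj (cycle_adj_of_val_succ (by omega) h)
      have c2 : i.val ≠ j.val + 1 := fun h =>
        hnadj (cycle_adj_of_val_succ (by omega) h).symm
      omega
    set lo := min i.val j.val with hlo
    have hlt : lo + 1 < n := by omega
    set a : Fin n := ⟨lo + 1, hlt⟩ with ha
    have hmod : lo % 3 = 0 := by omega
    have h₁ : (cycleGraph n).Adj i a := by
      rcases hd with h | h
      · exact cycle_adj_of_val_succ (by omega) (by simp [ha]; omega)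
      · exact (cycle_adj_of_val_succ (by omega) (show i.val = a.val + 1 by simp [ha]; omega)).symm
    have h₂ : (cycleGraph n).Adj a j := by
      rcases hd with h | h
      · exact cycle_adj_of_val_succ (by omega) (by simp [ha]; omega)
      · exact (cycle_adj_of_val_succ (by omega) (show a.val = j.val + 1 by simp [ha]; omega)).symm
    refine ⟨SimpleGraph.Walk.cons (wheel_adj_some.mpr h₁)
        (SimpleGraph.Walk.cons (wheel_adj_some.mpr h₂) SimpleGraph.Walk.nil), ?_, ?_, ?_, ?_, ?_⟩
    · simp [SimpleGraph.Walk.isPath_def, Fin.ext_iff, ha]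
      omega
    · simpa using hdist.symm
    · simp [internals, wcolE, ha]
      omega
    · intro e he
      simp at he
      rcases he with he | he <;> subst he <;> simpa using wcolE_lt hn _ _
    · intro x hx
      simp [internals] at hx
      subst hx
      simpa using (by omega : 2 < (n+2)/3 + 1)
  · -- different groups: go through the centre
    refine ⟨SimpleGraph.Walk.cons ((wheel_adj_none i).symm)
        (SimpleGraph.Walk.cons (wheel_adj_none j) SimpleGraph.Walk.nil), ?_, ?_, ?_, ?_, ?_⟩
    · simp [SimpleGraph.Walk.isPath_def, hne]
    · simpa using hdist.symm
    · simp [internals, wcolE]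
      omega
    · intro e he
      simp at he
      rcases he with he | he <;> subst he <;> simpa using wcolE_lt hn _ _
    · intro x hx
      simp [internals] at hx
      subst hx
      simpa using (by omega : (n+2)/3 < (n+2)/3 + 1)

lemma wheel_lower (n : ℕ) (hn : 4 ≤ n) (k : ℕ)
    (cE : Sym2 (Option (Fin n)) → ℕ) (cV : Option (Fin n) → ℕ)
    (h : ∀ u v, ∃ p : (wheelGraph n).Walk u v, p.IsPath ∧
        p.length = (wheelGraph n).dist u v ∧
        (p.edges.map cE ++ (internals p).map cV).Nodup ∧
        (∀ e ∈ p.edges, cE e < k) ∧ ∀ x ∈ internals p, cV x < k) :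
    (n+2)/3 + 1 ≤ k := by
  haveI : NeZero n := ⟨by omega⟩
  have key : ∀ i j : Fin n, i ≠ j → ¬(cycleGraph n).Adj i j →
      ∃ w, (wheelGraph n).Adj (some i) w ∧ (wheelGraph n).Adj w (some j) ∧
        cE s(some i, w) ≠ cE s(w, some j) ∧ cE s(some i, w) ≠ cV w ∧
        cE s(w, some j) ≠ cV w ∧ cE s(some i, w) < k ∧ cE s(w, some j) < k ∧ cV w < k := by
    intro i j hne hnadj
    obtain ⟨p, hp, hlen, hnd, hEk, hVk⟩ := h (some i) (some j)
    rw [wheel_dist_two hne hnadj] at hlen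
    obtain ⟨w, h1, h2, rfl⟩ := walk_length_two p hlen
    simp [internals] at hnd
    refine ⟨w, h1, h2, hnd.1.1, hnd.1.2, hnd.2, ?_, ?_, ?_⟩
    · exact hEk _ (by simp)
    · exact hEk _ (by simp)
    · exact hVk w (by simp [internals])
  -- part (a): k ≥ 3
  have hk3 : 3 ≤ k := by
    have hne : (⟨0, by omega⟩ : Fin n) ≠ ⟨2, by omega⟩ := by simp [Fin.ext_iff]
    have hnadj : ¬(cycleGraph n).Adj (⟨0, by omega⟩ : Fin n) ⟨2, by omega⟩ := by
      rw [cycle_adj_val (by omega)]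
      have := val_sub_cases (⟨0, by omega⟩ : Fin n) (⟨2, by omega⟩ : Fin n)
      simp only [Fin.val_mk] at this
      omega
    obtain ⟨w, _, _, hne1, hne2, hne3, hlt1, hlt2, hlt3⟩ := key _ _ hne hnadj
    omega
  rcases le_or_gt n 6 with hn6 | hn7
  · omega
  -- part (b): n ≥ 7
  have claim1 : ∀ i j : Fin n, 3 ≤ (j - i).val → (j - i).val ≤ n - 3 →
      cE s(some i, none) ≠ cE s(some j, none) ∧ cE s(some i, none) ≠ cV none ∧
      cE s(some i, none) < k ∧ cV none < k := by
    intro i j h3 hn3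
    have hne : i ≠ j := by
      rintro rfl
      simp at h3
    have hnadj : ¬(cycleGraph n).Adj i j := by
      rw [cycle_adj_val (by omega)]
      omega
    obtain ⟨w, h1, h2, hne1, hne2, hne3, hlt1, hlt2, hlt3⟩ := key _ _ hne hnadj
    have hw : w = none := by
      cases w with
      | none => rfl
      | some a =>
        exfalso
        rw [wheel_adj_some] at h1 h2
        rw [cycle_adj_val (by omega)] at h1 h2
        have hval : (j - i).val = ((a - i).val + (j - a).val) % n := by
          rw [show j - i = (a - i) + (j - a) by abel, Fin.val_add]
        rcases h1 with hx | hx <;> rcases h2 with hy | hy <;> rw [hx, hy] at hval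
        · rw [Nat.mod_eq_of_lt (by omega)] at hval; omega
        · rw [show 1 + (n - 1) = n by omega, Nat.mod_self] at hval; omega
        · rw [show n - 1 + 1 = n by omega, Nat.mod_self] at hval; omega
        · rw [show n - 1 + (n - 1) = n + (n - 2) by omega, Nat.add_mod_left,
            Nat.mod_eq_of_lt (by omega)] at hval; omega
    subst hw
    rw [Sym2.eq_swap (a := (none : Option (Fin n)))] at hne1 hne3 hlt2
    exact ⟨hne1, hne2, hlt1, hlt3⟩
  -- every spoke colour is < k and ≠ cV none
  have hx3 : ∀ i : Fin n, (i + ⟨3, by omega⟩ - i : Fin n).val = 3 := by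
    intro i
    rw [add_sub_cancel_left]
  have hspoke : ∀ i : Fin n, cE s(some i, none) ≠ cV none ∧ cE s(some i, none) < k := by
    intro i
    have := claim1 i (i + ⟨3, by omega⟩) (by rw [hx3]) (by rw [hx3]; omega)
    exact ⟨this.2.1, this.2.2.1⟩
  have hc0 : cV none < k := by
    have := claim1 (⟨0, by omega⟩ : Fin n) (⟨0, by omega⟩ + ⟨3, by omega⟩)
      (by rw [hx3]) (by rw [hx3]; omega)
    exact this.2.2.2
  -- pigeonhole
  set s : Fin n → ℕ := fun i => cE s(some i, none) with hs
  set c0 : ℕ := cV none with hc0def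
  set T : Finset ℕ := (Finset.range k).erase c0 with hT
  have hmemT : ∀ i : Fin n, s i ∈ T := by
    intro i
    exact Finset.mem_erase.mpr ⟨(hspoke i).1, Finset.mem_range.mpr (hspoke i).2⟩
  have hcardsum : (Finset.univ : Finset (Fin n)).card =
      ∑ c ∈ T, (Finset.univ.filter (fun i => s i = c)).card :=
    Finset.card_eq_sum_card_fiberwise (fun x _ => hmemT x)
  -- pairwise constraint inside a fiber
  have hP : ∀ x y : Fin n, s x = s y → (y - x).val ≤ 2 ∨ n - 2 ≤ (y - x).val := by
    intro x y hxy
    by_contra hcon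
    push_neg at hcon
    have hd := (y - x).isLt
    exact (claim1 x y (by omega) (by omega)).1 hxy
  have hfib : ∀ c ∈ T, (Finset.univ.filter (fun i => s i = c)).card ≤ 3 := by
    intro c _
    set F := Finset.univ.filter (fun i => s i = c) with hF
    by_contra hcard
    push_neg at hcard
    obtain ⟨a, ha⟩ := Finset.card_pos.mp (by omega : 0 < F.card)
    have hFs : ∀ x ∈ F, s x = c := by
      intro x hx
      exact (Finset.mem_filter.mp hx).2
    set two : Fin n := ⟨2, by omega⟩ with htwo
    set ψ : Fin n → ℕ := fun x => (x - a + two : Fin n).val with hψ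
    have hψ4 : ∀ x ∈ F, ψ x ≤ 4 := by
      intro x hx
      have hp := hP a x (by rw [hFs a ha, hFs x hx])
      have hd := (x - a).isLt
      have : ψ x = ((x - a).val + 2) % n := by
        rw [hψ]
        simp only
        rw [Fin.val_add, htwo]
      rcases hp with hp | hp
      · rw [this, Nat.mod_eq_of_lt (by omega)]; omega
      · rw [this, show (x - a).val + 2 = n + ((x - a).val + 2 - n) by omega,
          Nat.add_mod_left, Nat.mod_eq_of_lt (by omega)]
        omega
    have hQ : ∀ x ∈ F, ∀ y ∈ F, ψ x ≤ ψ y → ψ y ≤ ψ x + 2 := by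
      intro x hx y hy hle
      have hp := hP x y (by rw [hFs x hx, hFs y hy])
      have hsub : y - x = (y - a + two) - (x - a + two) := by abel
      have hvs := val_sub_cases (x - a + two : Fin n) (y - a + two : Fin n)
      rw [← hsub] at hvs
      have hax : ψ x = (x - a + two : Fin n).val := by rw [hψ]
      have hay : ψ y = (y - a + two : Fin n).val := by rw [hψ]
      have h4x := hψ4 x hx
      have h4y := hψ4 y hy
      omega
    have hinj : Set.InjOn ψ F := by
      intro x _ y _ hxy
      have : (x - a + two : Fin n) = (y - a + two : Fin n) :=
        Fin.val_injective hxy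
      have h2 : x - a = y - a := add_right_cancel this
      exact sub_left_inj.mp h2
    set I : Finset ℕ := F.image ψ with hI
    have hIcard : 4 ≤ I.card := by
      rw [hI, Finset.card_image_of_injOn hinj]
      omega
    have hgap : ∀ p q : ℕ, p ∈ I → q ∈ I → p + 3 ≤ q → False := by
      intro p q hp hq hpq
      obtain ⟨x, hx, hψx⟩ := Finset.mem_image.mp hp
      obtain ⟨y, hy, hψy⟩ := Finset.mem_image.mp hq
      have := hQ x hx y hy (by omega)
      omega
    have hsub3 : ∀ A : Finset ℕ, I ⊆ A → A.card ≤ 3 → False := by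
      intro A hA hAc
      have := Finset.card_le_card hA
      omega
    have hI5 : ∀ z ∈ I, z ≤ 4 := by
      intro z hz
      obtain ⟨x, hx, hψx⟩ := Finset.mem_image.mp hz
      rw [← hψx]
      exact hψ4 x hx
    by_cases h0 : 0 ∈ I
    · by_cases h3 : 3 ∈ I
      · exact hgap 0 3 h0 h3 (by omega)
      · by_cases h4 : 4 ∈ I
        · exact hgap 0 4 h0 h4 (by omega)
        · refine hsub3 {0, 1, 2} ?_ (by decide)
          intro z hz
          have := hI5 z hz
          have hz3 : z ≠ 3 := fun hh => h3 (hh ▸ hz)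
          have hz4 : z ≠ 4 := fun hh => h4 (hh ▸ hz)
          simp only [Finset.mem_insert, Finset.mem_singleton]
          omega
    · by_cases h1 : 1 ∈ I
      · by_cases h4 : 4 ∈ I
        · exact hgap 1 4 h1 h4 (by omega)
        · refine hsub3 {1, 2, 3} ?_ (by decide)
          intro z hz
          have := hI5 z hz
          have hz0 : z ≠ 0 := fun hh => h0 (hh ▸ hz)
          have hz4 : z ≠ 4 := fun hh => h4 (hh ▸ hz)
          simp only [Finset.mem_insert, Finset.mem_singleton]
          omega
      · refine hsub3 {2, 3, 4} ?_ (by decide)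
        intro z hz
        have := hI5 z hz
        have hz0 : z ≠ 0 := fun hh => h0 (hh ▸ hz)
        have hz1 : z ≠ 1 := fun hh => h1 (hh ▸ hz)
        simp only [Finset.mem_insert, Finset.mem_singleton]
        omega
  have hsum : ∑ c ∈ T, (Finset.univ.filter (fun i => s i = c)).card ≤ T.card * 3 := by
    calc ∑ c ∈ T, (Finset.univ.filter (fun i => s i = c)).card
        ≤ ∑ _c ∈ T, 3 := Finset.sum_le_sum hfib
      _ = T.card * 3 := by rw [Finset.sum_const, smul_eq_mul]
  have hTcard : T.card = k - 1 := by
    rw [hT, Finset.card_erase_of_mem (Finset.mem_range.mpr hc0), Finset.card_range]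
  have huniv : (Finset.univ : Finset (Fin n)).card = n := Finset.card_univ.trans (Fintype.card_fin n)
  have hfinal : n ≤ (k - 1) * 3 := by
    calc n = (Finset.univ : Finset (Fin n)).card := huniv.symm
      _ = ∑ c ∈ T, (Finset.univ.filter (fun i => s i = c)).card := hcardsum
      _ ≤ T.card * 3 := hsum
      _ = (k - 1) * 3 := by rw [hTcard]
  omega

lemma walk_length_one {V : Type*} {G : SimpleGraph V} {u v : V} (p : G.Walk u v)
    (h : p.length = 1) :
    ∃ (h1 : G.Adj u v), p = SimpleGraph.Walk.cons h1 SimpleGraph.Walk.nil := by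
  cases p with
  | nil => simp at h
  | cons h1 q =>
    cases q with
    | nil => exact ⟨h1, rfl⟩
    | cons h2 r => simp [SimpleGraph.Walk.length_cons] at h

lemma wheel3_adj {u v : Option (Fin 3)} (h : u ≠ v) : (wheelGraph 3).Adj u v := by
  cases u with
  | none =>
    cases v with
    | none => exact absurd rfl h
    | some j => exact wheel_adj_none j
  | some i =>
    cases v with
    | none => exact (wheel_adj_none i).symm
    | some j =>
      refine wheel_adj_some.mpr ?_
      rw [cycleGraph_three_eq_top]
      exact fun hij => h (by rw [hij])

/-- `strc(W_3) = 1`, and for every `n ≥ 4`, `strc(W_n) = ⌈n/3⌉ + 1`. -/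
theorem strc_wheel :
    strc (wheelGraph 3) = 1 ∧ ∀ n : ℕ, 4 ≤ n → strc (wheelGraph n) = (n + 2) / 3 + 1 := by
  constructor
  · have h1 : 1 ∈ {k | ∃ (cE : Sym2 (Option (Fin 3)) → ℕ) (cV : Option (Fin 3) → ℕ),
        ∀ u v, ∃ p : (wheelGraph 3).Walk u v, p.IsPath ∧
          p.length = (wheelGraph 3).dist u v ∧
          (p.edges.map cE ++ (internals p).map cV).Nodup ∧
          (∀ e ∈ p.edges, cE e < k) ∧ ∀ x ∈ internals p, cV x < k} := by
      refine ⟨fun _ => 0, fun _ => 0, fun u v => ?_⟩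
      by_cases huv : u = v
      · subst huv
        exact ⟨SimpleGraph.Walk.nil, SimpleGraph.Walk.IsPath.nil,
          by simp [SimpleGraph.dist_self], by simp [internals], by simp, by simp [internals]⟩
      · have hadj := wheel3_adj huv
        refine ⟨SimpleGraph.Walk.cons hadj SimpleGraph.Walk.nil, ?_, ?_, ?_, ?_, ?_⟩
        · simp [SimpleGraph.Walk.isPath_def, huv]
        · simp [SimpleGraph.dist_eq_one_iff_adj.mpr hadj]
        · simp [internals]
        · simp
        · simp [internals]
    have h0 : 0 ∉ {k | ∃ (cE : Sym2 (Option (Fin 3)) → ℕ) (cV : Option (Fin 3) → ℕ),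
        ∀ u v, ∃ p : (wheelGraph 3).Walk u v, p.IsPath ∧
          p.length = (wheelGraph 3).dist u v ∧
          (p.edges.map cE ++ (internals p).map cV).Nodup ∧
          (∀ e ∈ p.edges, cE e < k) ∧ ∀ x ∈ internals p, cV x < k} := by
      rintro ⟨cE, cV, h⟩
      obtain ⟨p, hp, hlen, hnd, hEk, hVk⟩ := h none (some ⟨0, by omega⟩)
      rw [SimpleGraph.dist_eq_one_iff_adj.mpr (wheel_adj_none _)] at hlen
      obtain ⟨h1, rfl⟩ := walk_length_one p hlen
      have := hEk s(none, some ⟨0, by omega⟩) (by simp)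
      omega
    rw [strc]
    refine le_antisymm (Nat.sInf_le h1) ?_
    rcases Nat.eq_zero_or_pos (sInf {k | ∃ (cE : Sym2 (Option (Fin 3)) → ℕ)
        (cV : Option (Fin 3) → ℕ),
        ∀ u v, ∃ p : (wheelGraph 3).Walk u v, p.IsPath ∧
          p.length = (wheelGraph 3).dist u v ∧
          (p.edges.map cE ++ (internals p).map cV).Nodup ∧
          (∀ e ∈ p.edges, cE e < k) ∧ ∀ x ∈ internals p, cV x < k}) with hz | hz
    · rcases Nat.sInf_eq_zero.mp hz with hmem | hemp
      · exact absurd hmem h0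
      · rw [hemp] at h1
        exact absurd h1 (Set.notMem_empty 1)
    · exact hz
  · intro n hn
    rw [strc]
    refine le_antisymm (Nat.sInf_le (wheel_upper n hn)) ?_
    refine le_csInf ⟨_, wheel_upper n hn⟩ ?_
    rintro k ⟨cE, cV, hk⟩
    exact wheel_lower n hn k cE cV hk

end RainbowConn
end

section
/- For all integers 2 ≤ m ≤ n, strc(K_{m,n}) = ⌈n^{1/m}⌉ + 1, where ⌈n^{1/m}⌉ is the least integer b with b^m ≥ n. -/
/- Definitions of the six rainbow connection parameters.

A colouring with (at most) `k` colours uses colours from `{0, ..., k-1}`.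
Following the usual convention in the literature, only the colours appearing
on the edges / internal vertices of the witnessing paths are required to lie
in the palette; this yields e.g. `rvc(G) = 0` for complete graphs `G`. -/

namespace RainbowConn

variable {V : Type*}

open SimpleGraph



open Sum Sym2

lemma exists_inj_ext {β : Type*} [Fintype β] [DecidableEq β] {m n : ℕ}
    (hmn : m ≤ n) (hcard : n ≤ Fintype.card β) (e : Fin m → β) (he : Function.Injective e) :
    ∃ v : Fin n → β, Function.Injective v ∧ ∀ i : Fin m, v (Fin.castLE hmn i) = e i := by
  have hrange : Fintype.card {x : β // x ∈ Set.range e} = m := by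
    have := Set.card_range_of_injective he
    rw [Fintype.card_fin] at this
    exact (Fintype.card_congr (Equiv.subtypeEquivRight fun x => Iff.rfl)).trans this
  have hcard2 : Fintype.card (Fin (n - m)) ≤ Fintype.card {x : β // x ∉ Set.range e} := by
    rw [Fintype.card_fin, Fintype.card_subtype_compl, hrange]
    omega
  obtain ⟨f⟩ := Function.Embedding.nonempty_of_card_le hcard2
  refine ⟨fun j => if h : (j : ℕ) < m then e ⟨j, h⟩ else (f ⟨(j : ℕ) - m, by omega⟩ : β), ?_, ?_⟩
  · intro j j' hv
    by_cases h : (j : ℕ) < m <;> by_cases h' : (j' : ℕ) < m <;> simp [h, h'] at hv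
    · have := he hv; apply Fin.ext; simpa using congrArg Fin.val this
    · exact absurd ⟨_, hv⟩ (f ⟨(j' : ℕ) - m, by omega⟩).2
    · exact absurd ⟨_, hv.symm⟩ (f ⟨(j : ℕ) - m, by omega⟩).2
    · have := f.injective (Subtype.ext hv)
      have := congrArg Fin.val this
      simp at this
      apply Fin.ext; omega
  · intro i
    simp [i.2]

section Graph
variable {m n : ℕ}

lemma distAB (a : Fin m) (b : Fin n) :
    (completeBipartiteGraph (Fin m) (Fin n)).dist (inl a) (inr b) = 1 :=
  dist_eq_one_iff_adj.mpr (by simp)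

lemma distBA (a : Fin m) (b : Fin n) :
    (completeBipartiteGraph (Fin m) (Fin n)).dist (inr b) (inl a) = 1 :=
  dist_eq_one_iff_adj.mpr (by simp)

lemma distAA {a a' : Fin m} (h : a ≠ a') (b : Fin n) :
    (completeBipartiteGraph (Fin m) (Fin n)).dist (inl a) (inl a') = 2 := by
  set G := completeBipartiteGraph (Fin m) (Fin n)
  have h1 : G.Adj (inl a) (inr b) := by simp [G]
  have h2 : G.Adj (inr b) (inl a') := by simp [G]
  have hw : G.dist (inl a) (inl a') ≤ 2 := by
    have := G.dist_le (SimpleGraph.Walk.cons h1 (SimpleGraph.Walk.cons h2 SimpleGraph.Walk.nil))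
    simpa using this
  have hne : (inl a : Fin m ⊕ Fin n) ≠ inl a' := by simp [h]
  have h0 : G.dist (inl a) (inl a') ≠ 0 := fun h' => hne
    (((SimpleGraph.Walk.cons h1 (SimpleGraph.Walk.cons h2 SimpleGraph.Walk.nil)).reachable.dist_eq_zero_iff).mp h')
  have hone : G.dist (inl a) (inl a') ≠ 1 := by
    intro h'
    have := dist_eq_one_iff_adj.mp h'
    simp [G] at this
  omega

lemma distBB {b b' : Fin n} (h : b ≠ b') (a : Fin m) :
    (completeBipartiteGraph (Fin m) (Fin n)).dist (inr b) (inr b') = 2 := by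
  set G := completeBipartiteGraph (Fin m) (Fin n)
  have h1 : G.Adj (inr b) (inl a) := by simp [G]
  have h2 : G.Adj (inl a) (inr b') := by simp [G]
  have hw : G.dist (inr b) (inr b') ≤ 2 := by
    have := G.dist_le (SimpleGraph.Walk.cons h1 (SimpleGraph.Walk.cons h2 SimpleGraph.Walk.nil))
    simpa using this
  have hne : (inr b : Fin m ⊕ Fin n) ≠ inr b' := by simp [h]
  have h0 : G.dist (inr b) (inr b') ≠ 0 := fun h' => hne
    (((SimpleGraph.Walk.cons h1 (SimpleGraph.Walk.cons h2 SimpleGraph.Walk.nil)).reachable.dist_eq_zero_iff).mp h')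
  have hone : G.dist (inr b) (inr b') ≠ 1 := by
    intro h'
    have := dist_eq_one_iff_adj.mp h'
    simp [G] at this
  omega

end Graph

lemma internals_nil {V : Type*} {G : SimpleGraph V} {u : V} :
    internals (SimpleGraph.Walk.nil : G.Walk u u) = [] := rfl

lemma internals_one {V : Type*} {G : SimpleGraph V} {u v : V} (h : G.Adj u v) :
    internals (SimpleGraph.Walk.cons h SimpleGraph.Walk.nil) = [] := rfl

lemma internals_two {V : Type*} {G : SimpleGraph V} {u x v : V} (h1 : G.Adj u x) (h2 : G.Adj x v) :
    internals (SimpleGraph.Walk.cons h1 (SimpleGraph.Walk.cons h2 SimpleGraph.Walk.nil)) = [x] := rfl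

/-- For all integers `2 ≤ m ≤ n`, `strc(K_{m,n}) = ⌈n^{1/m}⌉ + 1`, where `⌈n^{1/m}⌉` is
the least integer `b` with `b ^ m ≥ n`. -/
theorem strc_completeBipartite (m n : ℕ) (hm : 2 ≤ m) (hmn : m ≤ n) :
    strc (completeBipartiteGraph (Fin m) (Fin n)) = sInf {b : ℕ | n ≤ b ^ m} + 1 := by
  set G := completeBipartiteGraph (Fin m) (Fin n) with hG
  set k := sInf {b : ℕ | n ≤ b ^ m} with hk
  have hkmem : n ≤ k ^ m := Nat.sInf_mem (⟨n, Nat.le_self_pow (by omega : m ≠ 0) n⟩ : {b : ℕ | n ≤ b ^ m}.Nonempty)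
  have hk2 : 2 ≤ k := by
    by_contra hlt
    push_neg at hlt
    have h1 : k ^ m ≤ 1 ^ m := Nat.pow_le_pow_left (by omega) m
    simp at h1
    omega
  -- the colouring for the upper bound
  have hcard : n ≤ Fintype.card (Fin m → Fin k) := by
    simpa [Fintype.card_fun] using hkmem
  obtain ⟨v, hvinj, hve⟩ := exists_inj_ext hmn hcard
    (fun i j => if j = i then (⟨1, by omega⟩ : Fin k) else ⟨0, by omega⟩)
    (by
      intro i i' hii
      by_contra hii'
      have h1 := congrFun hii i
      simp [hii', Fin.ext_iff] at h1)
  set f : (Fin m ⊕ Fin n) → (Fin m ⊕ Fin n) → ℕ := fun x y =>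
    match x, y with
    | inl a, inr b => (v b a : ℕ)
    | inr b, inl a => (v b a : ℕ)
    | _, _ => 0 with hf
  have hfcomm : ∀ x y, f x y = f y x := by
    rintro (a | b) (a' | b') <;> rfl
  have hfval : ∀ (a : Fin m) (b : Fin n), Sym2.lift ⟨f, hfcomm⟩ s(inl a, inr b) = (v b a : ℕ) := by
    intro a b; rfl
  have hfval' : ∀ (a : Fin m) (b : Fin n), Sym2.lift ⟨f, hfcomm⟩ s(inr b, inl a) = (v b a : ℕ) := by
    intro a b; rfl
  have hmem : (k + 1) ∈ {t | ∃ (cE : Sym2 (Fin m ⊕ Fin n) → ℕ) (cV : (Fin m ⊕ Fin n) → ℕ),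
      ∀ u w : Fin m ⊕ Fin n, ∃ p : G.Walk u w, p.IsPath ∧
      p.length = G.dist u w ∧ (p.edges.map cE ++ (internals p).map cV).Nodup ∧
      (∀ e ∈ p.edges, cE e < t) ∧ ∀ x ∈ internals p, cV x < t} := by
    have hconst : ∀ x : Fin m ⊕ Fin n, (fun _ : Fin m ⊕ Fin n => k) x = k := fun _ => rfl
    refine ⟨Sym2.lift ⟨f, hfcomm⟩, fun _ => k, ?_⟩
    intro u w
    by_cases huw : u = w
    · subst huw
      exact ⟨SimpleGraph.Walk.nil, SimpleGraph.Walk.IsPath.nil,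
        by simp [SimpleGraph.dist_self], by simp [internals_nil], by simp, by simp [internals_nil]⟩
    rcases u with a | b <;> rcases w with a' | b'
    · -- inl a, inl a'
      have haa' : a ≠ a' := fun h => huw (by rw [h])
      set b0 : Fin n := Fin.castLE hmn a with hb0
      have h1 : G.Adj (inl a) (inr b0) := by simp [hG]
      have h2 : G.Adj (inr b0) (inl a') := by simp [hG]
      refine ⟨SimpleGraph.Walk.cons h1 (SimpleGraph.Walk.cons h2 SimpleGraph.Walk.nil), ?_, ?_, ?_, ?_, ?_⟩
      · simp [SimpleGraph.Walk.isPath_def, haa']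
      · simp [hG, distAA haa' b0]
      · have e1 : Sym2.lift ⟨f, hfcomm⟩ s(inl a, inr b0) = 1 := by
          rw [hfval, hb0, hve a]; simp
        have e2 : Sym2.lift ⟨f, hfcomm⟩ s(inr b0, inl a') = 0 := by
          rw [hfval', hb0, hve a]; simp [haa'.symm]
        simp [internals_two, SimpleGraph.Walk.edges_cons, e1, e2, hconst]
        omega
      · intro ed hed
        simp [SimpleGraph.Walk.edges_cons] at hed
        rcases hed with h | h <;> rw [h]
        · rw [hfval]; omega
        · rw [hfval']; omega
      · intro x hx
        simp [internals_two] at hx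
        subst hx
        exact Nat.lt_succ_self k
    · -- inl a, inr b'
      have h1 : G.Adj (inl a) (inr b') := by simp [hG]
      refine ⟨SimpleGraph.Walk.cons h1 SimpleGraph.Walk.nil, ?_, ?_, ?_, ?_, ?_⟩
      · simp [SimpleGraph.Walk.isPath_def]
      · exact (distAB a b').symm
      · simp [internals_one]
      · intro ed hed
        simp [SimpleGraph.Walk.edges_cons] at hed
        rw [hed, hfval]
        have := (v b' a).2
        omega
      · intro x hx
        simp [internals_one] at hx
    · -- inr b, inl a'
      have h1 : G.Adj (inr b) (inl a') := by simp [hG]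
      refine ⟨SimpleGraph.Walk.cons h1 SimpleGraph.Walk.nil, ?_, ?_, ?_, ?_, ?_⟩
      · simp [SimpleGraph.Walk.isPath_def]
      · exact (distBA a' b).symm
      · simp [internals_one]
      · intro ed hed
        simp [SimpleGraph.Walk.edges_cons] at hed
        rw [hed, hfval']
        have := (v b a').2
        omega
      · intro x hx
        simp [internals_one] at hx
    · -- inr b, inr b'
      have hbb' : b ≠ b' := fun h => huw (by rw [h])
      have hvne : v b ≠ v b' := fun h => hbb' (hvinj h)
      obtain ⟨a, ha⟩ := Function.ne_iff.mp hvne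
      have h1 : G.Adj (inr b) (inl a) := by simp [hG]
      have h2 : G.Adj (inl a) (inr b') := by simp [hG]
      refine ⟨SimpleGraph.Walk.cons h1 (SimpleGraph.Walk.cons h2 SimpleGraph.Walk.nil), ?_, ?_, ?_, ?_, ?_⟩
      · simp [SimpleGraph.Walk.isPath_def, hbb']
      · simp [hG, distBB hbb' a]
      · have hne : (v b a : ℕ) ≠ (v b' a : ℕ) := fun h => ha (Fin.ext h)
        have hb1 := (v b a).2
        have hb2 := (v b' a).2
        simp [internals_two, SimpleGraph.Walk.edges_cons, hfval, hfval', hconst]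
        refine ⟨⟨hne, by omega⟩, by omega⟩
      · intro ed hed
        simp [SimpleGraph.Walk.edges_cons] at hed
        rcases hed with h | h <;> rw [h]
        · rw [hfval']
          have := (v b a).2
          omega
        · rw [hfval]
          have := (v b' a).2
          omega
      · intro x hx
        simp [internals_two] at hx
        subst hx
        exact Nat.lt_succ_self k
  refine le_antisymm (Nat.sInf_le hmem) (le_csInf ⟨k + 1, hmem⟩ ?_)
  rintro t ⟨cE, cV, hcol⟩
  -- every a-b edge colour is < t
  have hedge : ∀ (a : Fin m) (b : Fin n), cE s(inl a, inr b) < t := by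
    intro a b
    obtain ⟨p, hp, hlen, hnd, hcE, hcV⟩ := hcol (inl a) (inr b)
    rw [distAB] at hlen
    cases p with
    | cons h q =>
      cases q with
      | nil => exact hcE s(inl a, inr b) (by simp)
      | cons h' q' => simp at hlen
  -- geodesic structure between two right vertices
  have hpair : ∀ b b' : Fin n, b ≠ b' → ∃ a : Fin m,
      cE s(inl a, inr b) ≠ cE s(inl a, inr b') ∧ cE s(inl a, inr b) ≠ cV (inl a) ∧
      cE s(inl a, inr b') ≠ cV (inl a) ∧ cV (inl a) < t := by
    intro b b' hbb'
    obtain ⟨p, hp, hlen, hnd, hcE, hcV⟩ := hcol (inr b) (inr b')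
    rw [distBB hbb' ⟨0, by omega⟩] at hlen
    cases p with
    | nil => simp at hlen
    | cons h1 q =>
      cases q with
      | nil => simp at hlen
      | cons h2 q' =>
        cases q' with
        | cons h3 q'' => simp at hlen
        | nil =>
          rename_i x
          rcases x with a | c
          · have hsw : cE s(inr b, inl a) = cE s(inl a, inr b) := by
              rw [Sym2.eq_swap (a := inr b) (b := inl a)]
            have := hnd
            simp only [SimpleGraph.Walk.edges_cons, SimpleGraph.Walk.edges_nil, internals_two,
              List.map_cons, List.map_nil, List.nil_append, List.cons_append, hsw] at this
            simp only [List.nodup_cons, List.mem_cons, List.mem_singleton, List.not_mem_nil,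
              or_false, not_or, List.nodup_nil, and_true] at this
            exact ⟨a, this.1.1, this.1.2, this.2.1, hcV (inl a) (by simp [internals_two])⟩
          · simp [hG] at h1
  have ht2 : 2 ≤ t := by
    have h01 : (⟨0, by omega⟩ : Fin n) ≠ ⟨1, by omega⟩ := by simp
    obtain ⟨a, hne, _, _, _⟩ := hpair _ _ h01
    have e1 := hedge a ⟨0, by omega⟩
    have e2 := hedge a ⟨1, by omega⟩
    omega
  -- the counting argument
  set S : Fin m → Finset ℕ := fun a =>
    if cV (inl a) < t then Finset.range t \ {cV (inl a)} else {0} with hS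
  set F : Fin n → (Fin m → ℕ) := fun b a =>
    if cV (inl a) < t then
      (if cE s(inl a, inr b) = cV (inl a) then (if cV (inl a) = 0 then 1 else 0)
       else cE s(inl a, inr b))
    else 0 with hF
  have hFmem : ∀ b, F b ∈ Fintype.piFinset S := by
    intro b
    rw [Fintype.mem_piFinset]
    intro a
    by_cases hc : cV (inl a) < t
    · simp only [hF, hS, hc, if_true, Finset.mem_sdiff, Finset.mem_range, Finset.mem_singleton]
      by_cases hd : cE s(inl a, inr b) = cV (inl a)
      · by_cases h0 : cV (inl a) = 0 <;> simp [hd, h0] <;> omega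
      · simp [hd]
        exact hedge a b
    · simp [hF, hS, hc]
  have hFinj : Function.Injective F := by
    intro b b' hFe
    by_contra hne
    obtain ⟨a, hne12, h1v, h2v, hvt⟩ := hpair b b' hne
    have := congrFun hFe a
    simp only [hF, hvt, if_true, if_neg h1v, if_neg h2v] at this
    exact hne12 this
  have hcount : n ≤ (t - 1) ^ m := by
    have h1 : (Finset.univ : Finset (Fin n)).card ≤ (Fintype.piFinset S).card :=
      Finset.card_le_card_of_injOn F (fun b _ => hFmem b) (Function.Injective.injOn hFinj)
    rw [Finset.card_univ, Fintype.card_fin, Fintype.card_piFinset] at h1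
    refine h1.trans ?_
    calc ∏ a : Fin m, (S a).card ≤ ∏ _a : Fin m, (t - 1) := by
          apply Finset.prod_le_prod'
          intro a _
          by_cases hc : cV (inl a) < t
          · simp only [hS, hc, if_true]
            rw [Finset.card_sdiff_of_subset (by simp [Finset.mem_range]; omega)]
            simp
          · simp only [hS, hc, if_false]
            simp
            omega
      _ = (t - 1) ^ m := by simp [Finset.prod_const, Finset.card_univ]
  have hkle : k ≤ t - 1 := Nat.sInf_le hcount
  omega

end RainbowConn
end
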